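/- arXiv:2303.16868 — 8 statements merged into one kernel-verified Lean document; each statement's English description precedes it below -/
import Mathlib

section
/- Let f_1 and f_2 be positive bumps on [0,1] with orbitals (a_1,b_1) and (a_2,b_2) respectively, and assume a_1 < a_2, b_2 < b_1, and b_2 ≤ f_1(a_2) (so that the orbital of f_2 lies inside a fundamental domain of f_1). Then for all integers m ≠ n, the homeomorphisms f_1^{-m} f_2 f_1^{m} and f_1^{-n} f_2 f_1^{n} have disjoint supports, and in particular they commute. -/
/-- The group of orientation-preserving homeomorphisms of `[0,1]`, modeled as
order-isomorphisms of the unit interval. -/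
abbrev Homeo := unitInterval ≃o unitInterval

/-- `f` is a positive bump with orbital `(a,b)`. -/
def IsPosBump (f : Homeo) (a b : ℝ) : Prop :=
  0 ≤ a ∧ a < b ∧ b ≤ 1 ∧
  (∀ x : unitInterval, (x : ℝ) ≤ (f x : ℝ)) ∧
  (∀ x : unitInterval, f x ≠ x ↔ a < (x : ℝ) ∧ (x : ℝ) < b)

private lemma le_pow_apply (f : Homeo) (hf : ∀ x : unitInterval, (x : ℝ) ≤ (f x : ℝ)) :
    ∀ (k : ℕ) (x : unitInterval), (x : ℝ) ≤ ((f ^ k) x : ℝ) := by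
  intro k
  induction k with
  | zero => intro x; simp
  | succ j ih =>
    intro x
    have h1 : (f ^ (j + 1)) x = (f ^ j) (f x) := by rw [pow_succ]; rfl
    rw [h1]
    exact le_trans (hf x) (ih (f x))

private lemma key (f₁ : Homeo) (a₂ b₂ : ℝ) (ha : 0 ≤ a₂) (ha1 : a₂ ≤ 1)
    (hid : ∀ x : unitInterval, (x : ℝ) ≤ (f₁ x : ℝ))
    (h₃ : b₂ ≤ ((f₁ ⟨a₂, ha, ha1⟩ : unitInterval) : ℝ))
    (m n : ℤ) (hmn : m < n) (x : unitInterval)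
    (hx : a₂ < (((f₁ ^ m) x : unitInterval) : ℝ) ∧ (((f₁ ^ m) x : unitInterval) : ℝ) < b₂)
    (hy : a₂ < (((f₁ ^ n) x : unitInterval) : ℝ) ∧ (((f₁ ^ n) x : unitInterval) : ℝ) < b₂) :
    False := by
  set A : unitInterval := ⟨a₂, ha, ha1⟩ with hA
  set y : unitInterval := (f₁ ^ m) x with hy'
  obtain ⟨j, hj⟩ : ∃ j : ℕ, n - m = (j : ℤ) + 1 := by
    refine ⟨(n - m - 1).toNat, ?_⟩
    omega
  have hzn : (f₁ ^ n) x = (f₁ ^ (j + 1) : Homeo) y := by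
    have h1 : f₁ ^ n = (f₁ ^ (n - m)) * f₁ ^ m := by
      rw [← zpow_add]; ring_nf
    have h2 : f₁ ^ (n - m) = (f₁ ^ (j + 1) : Homeo) := by
      rw [hj]
      rw [show ((j : ℤ) + 1) = ((j + 1 : ℕ) : ℤ) by push_cast; ring, zpow_natCast]
    rw [h1, h2]; rfl
  have hpow : ((f₁ ^ (j + 1) : Homeo) y : ℝ) = ((f₁ ^ j : Homeo) (f₁ y) : ℝ) := by
    rw [pow_succ]; rfl
  have hAy : A < y := by
    rw [← Subtype.coe_lt_coe]
    exact hx.1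
  have h4 : ((f₁ A : unitInterval) : ℝ) < ((f₁ y : unitInterval) : ℝ) := by
    exact_mod_cast f₁.strictMono hAy
  have h5 : ((f₁ y : unitInterval) : ℝ) ≤ ((f₁ ^ j : Homeo) (f₁ y) : ℝ) :=
    le_pow_apply f₁ hid j (f₁ y)
  have h6 : (((f₁ ^ n) x : unitInterval) : ℝ) = ((f₁ ^ j : Homeo) (f₁ y) : ℝ) := by
    rw [hzn, hpow]
  have := hy.2
  rw [h6] at this
  linarith

/-- If the orbital of `f₂` lies inside a fundamental domain of `f₁`, then for integers
`m ≠ n` the conjugates `f₁⁻ᵐ f₂ f₁ᵐ` and `f₁⁻ⁿ f₂ f₁ⁿ` have disjoint supports, and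
in particular they commute. -/
theorem conjugates_disjoint_supports
    (f₁ f₂ : Homeo) (a₁ b₁ a₂ b₂ : ℝ)
    (hf₁ : IsPosBump f₁ a₁ b₁) (hf₂ : IsPosBump f₂ a₂ b₂)
    (h₁ : a₁ < a₂) (h₂ : b₂ < b₁)
    (h₃ : ∀ x : unitInterval, (x : ℝ) = a₂ → b₂ ≤ (f₁ x : ℝ))
    (m n : ℤ) (hmn : m ≠ n) :
    Disjoint {x : unitInterval | ((f₁ ^ m)⁻¹ * f₂ * f₁ ^ m) x ≠ x}
        {x : unitInterval | ((f₁ ^ n)⁻¹ * f₂ * f₁ ^ n) x ≠ x} ∧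
      Commute ((f₁ ^ m)⁻¹ * f₂ * f₁ ^ m) ((f₁ ^ n)⁻¹ * f₂ * f₁ ^ n) := by
  obtain ⟨ha₁0, ha₁b₁, hb₁1, hid1, hsupp1⟩ := hf₁
  obtain ⟨ha₂0, ha₂b₂, hb₂1, hid2, hsupp2⟩ := hf₂
  have ha0 : 0 ≤ a₂ := le_of_lt (lt_of_le_of_lt ha₁0 h₁)
  have ha1 : a₂ ≤ 1 := le_trans (le_of_lt ha₂b₂) hb₂1
  have hb0 : 0 ≤ b₂ := le_trans ha0 (le_of_lt ha₂b₂)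
  set A : unitInterval := ⟨a₂, ha0, ha1⟩ with hA
  set B : unitInterval := ⟨b₂, hb0, hb₂1⟩ with hB
  have h₃' : b₂ ≤ ((f₁ A : unitInterval) : ℝ) := h₃ A rfl
  -- f₂ fixes B
  have hfB : f₂ B = B := by
    by_contra h
    exact lt_irrefl b₂ ((hsupp2 B).mp h).2
  -- characterization of the support of the conjugate
  have hchar : ∀ (k : ℤ) (x : unitInterval),
      ((f₁ ^ k)⁻¹ * f₂ * f₁ ^ k) x ≠ x ↔
        a₂ < (((f₁ ^ k) x : unitInterval) : ℝ) ∧ (((f₁ ^ k) x : unitInterval) : ℝ) < b₂ := by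
    intro k x
    have h0 : ((f₁ ^ k)⁻¹ * f₂ * f₁ ^ k) x = (f₁ ^ k).symm (f₂ ((f₁ ^ k) x)) := rfl
    rw [h0, ne_eq, OrderIso.symm_apply_eq]
    exact hsupp2 ((f₁ ^ k) x)
  -- invariance: the conjugate maps its support into itself
  have hinv : ∀ (k : ℤ) (x : unitInterval),
      (a₂ < (((f₁ ^ k) x : unitInterval) : ℝ) ∧ (((f₁ ^ k) x : unitInterval) : ℝ) < b₂) →
      (a₂ < (((f₁ ^ k) (((f₁ ^ k)⁻¹ * f₂ * f₁ ^ k) x) : unitInterval) : ℝ) ∧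
        (((f₁ ^ k) (((f₁ ^ k)⁻¹ * f₂ * f₁ ^ k) x) : unitInterval) : ℝ) < b₂) := by
    intro k x hx
    have h0 : (f₁ ^ k) (((f₁ ^ k)⁻¹ * f₂ * f₁ ^ k) x) = f₂ ((f₁ ^ k) x) := by
      show (f₁ ^ k) ((f₁ ^ k).symm (f₂ ((f₁ ^ k) x))) = f₂ ((f₁ ^ k) x)
      exact (f₁ ^ k).apply_symm_apply _
    rw [h0]
    set y : unitInterval := (f₁ ^ k) x
    constructor
    · exact lt_of_lt_of_le hx.1 (hid2 y)
    · have hyB : y < B := by rw [← Subtype.coe_lt_coe]; exact hx.2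
      have := f₂.strictMono hyB
      rw [hfB] at this
      exact_mod_cast this
  -- disjointness of the two supports
  have hdisj : ∀ x : unitInterval,
      (a₂ < (((f₁ ^ m) x : unitInterval) : ℝ) ∧ (((f₁ ^ m) x : unitInterval) : ℝ) < b₂) →
      (a₂ < (((f₁ ^ n) x : unitInterval) : ℝ) ∧ (((f₁ ^ n) x : unitInterval) : ℝ) < b₂) →
      False := by
    intro x hx hy
    rcases lt_or_gt_of_ne hmn with h | h
    · exact key f₁ a₂ b₂ ha0 ha1 hid1 h₃' m n h x hx hy
    · exact key f₁ a₂ b₂ ha0 ha1 hid1 h₃' n m h x hy hx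
  constructor
  · rw [Set.disjoint_left]
    intro x hxm hxn
    exact hdisj x ((hchar m x).mp hxm) ((hchar n x).mp hxn)
  · set g : Homeo := (f₁ ^ m)⁻¹ * f₂ * f₁ ^ m with hg
    set h : Homeo := (f₁ ^ n)⁻¹ * f₂ * f₁ ^ n with hh
    have hgfix : ∀ x : unitInterval,
        ¬(a₂ < (((f₁ ^ m) x : unitInterval) : ℝ) ∧ (((f₁ ^ m) x : unitInterval) : ℝ) < b₂) →
        g x = x := by
      intro x hx
      by_contra hc
      exact hx ((hchar m x).mp hc)
    have hhfix : ∀ x : unitInterval,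
        ¬(a₂ < (((f₁ ^ n) x : unitInterval) : ℝ) ∧ (((f₁ ^ n) x : unitInterval) : ℝ) < b₂) →
        h x = x := by
      intro x hx
      by_contra hc
      exact hx ((hchar n x).mp hc)
    have hext : ∀ x : unitInterval, (g * h) x = (h * g) x := by
      intro x
      show g (h x) = h (g x)
      by_cases hm : a₂ < (((f₁ ^ m) x : unitInterval) : ℝ) ∧ (((f₁ ^ m) x : unitInterval) : ℝ) < b₂
      · have hn : ¬(a₂ < (((f₁ ^ n) x : unitInterval) : ℝ) ∧
            (((f₁ ^ n) x : unitInterval) : ℝ) < b₂) := fun hn => hdisj x hm hn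
        have h1 : h x = x := hhfix x hn
        have h2 : h (g x) = g x := by
          refine hhfix (g x) ?_
          intro hc
          exact hdisj (g x) (hinv m x hm) hc
        rw [h1, h2]
      · have h1 : g x = x := hgfix x hm
        by_cases hn : a₂ < (((f₁ ^ n) x : unitInterval) : ℝ) ∧
            (((f₁ ^ n) x : unitInterval) : ℝ) < b₂
        · have h2 : g (h x) = h x := by
            refine hgfix (h x) ?_
            intro hc
            exact hdisj (h x) hc (hinv n x hn)
          rw [h1, h2]
        · have h2 : h x = x := hhfix x hn
          simp [h1, h2]
    exact OrderIso.ext (funext hext)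
end

section
/- Let f_1 and f_2 be positive bumps on [0,1] with orbitals (a_1,b_1) and (a_2,b_2) respectively, and assume a_1 < a_2, b_2 < b_1, and b_2 ≤ f_1(a_2). Then the conjugates g_n = f_1^{-n} f_2 f_1^{n} (n ∈ ℤ) form a basis of a free abelian subgroup of Homeo_+([0,1]): they pairwise commute, and whenever a product ∏_{n} g_n^{k_n} over finitely many integers n with integer exponents k_n equals the identity, all the exponents k_n are zero. -/
/-!
Because `f₁ ≥ id` and `f₁ a₂ ≥ b₂`, the sets `{x | f₁ⁿ x ∈ (a₂, b₂)}`, `n ∈ ℤ`, are pairwise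
disjoint, and `gₙ` is supported in the `n`-th one; elements with disjoint supports
commute. If `∏ gₘ ^ kₘ = 1` with `kₙ ≠ 0`, evaluate the product at a point `x` moved by `gₙ`: all
other factors fix `x`, so `gₙ ^ kₙ` fixes `x`. This is impossible, since an order automorphism of a
linear order has no periodic points besides its fixed points.
-/

open MulAction Set

namespace MulAction

variable {G α : Type*}

theorem commute_of_disjoint_movedBy [Group G] [MulAction G α] [FaithfulSMul G α] {g h : G}
    (H : Disjoint (fixedBy α g)ᶜ (fixedBy α h)ᶜ) : Commute g h :=
  Commute.of_map (f := toPermHom G α) toPerm_injective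
    (Equiv.Perm.Disjoint.commute fun x => by
      by_contra! hx
      exact Set.disjoint_left.1 H hx.1 hx.2)

theorem mem_fixedBy_inv_mul_mul_iff [Group G] [MulAction G α] {g h : G} {x : α} :
    x ∈ fixedBy α (h⁻¹ * g * h) ↔ h • x ∈ fixedBy α g := by
  simp only [mem_fixedBy, mul_smul, inv_smul_eq_iff]

theorem list_prod_map_smul_eq_of_forall_ne [Monoid G] [MulAction G α] {ι : Type*} {f : ι → G}
    {l : List ι} (hl : l.Nodup) (hcomm : l.Pairwise fun i j => Commute (f i) (f j)) {n : ι}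
    (hn : n ∈ l) {x : α} (hx : ∀ m ∈ l, m ≠ n → f m • x = x) :
    (l.map f).prod • x = f n • x := by
  classical
  have hfix : ((l.erase n).map f).prod ∈ stabilizerSubmonoid G x :=
    Submonoid.list_prod_mem _ <| List.forall_mem_map.2 fun m hm =>
      have ⟨hmn, hml⟩ := hl.mem_erase_iff.1 hm
      hx m hml hmn
  rw [((List.perm_cons_erase hn).map f).prod_eq' (List.pairwise_map.2 hcomm), List.map_cons,
    List.prod_cons, mul_smul, hfix]

end MulAction

namespace OrderIso

variable {α : Type*}

theorem monotone_zpow_apply [Preorder α] {f : α ≃o α} (hf : ∀ x, x ≤ f x) (x : α) :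
    Monotone fun n : ℤ => (f ^ n) x :=
  monotone_int_of_le_succ fun n => by
    rw [zpow_add_one]
    exact (f ^ n).monotone (hf x)

theorem lt_pow_apply [Preorder α] {f : α ≃o α} {x : α} (hx : x < f x) {n : ℕ} (hn : n ≠ 0) :
    x < (f ^ n) x := by
  induction n with
  | zero => exact absurd rfl hn
  | succ n ih =>
    rw [pow_succ', RelIso.mul_apply]
    rcases eq_or_ne n 0 with rfl | hn
    · exact hx
    · exact hx.trans_le (f.monotone (ih hn).le)

theorem zpow_apply_ne_self [LinearOrder α] {f : α ≃o α} {x : α} (hx : f x ≠ x) {j : ℤ}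
    (hj : j ≠ 0) : (f ^ j) x ≠ x := by
  wlog hlt : x < f x generalizing f j
  · have hinv : x < f⁻¹ x := f.lt_symm_apply.2 (hx.lt_or_gt.resolve_right hlt)
    simpa [inv_zpow'] using this hinv.ne' (neg_ne_zero.2 hj) hinv
  intro h
  have habs := mem_fixedBy_zpow (show x ∈ fixedBy α (f ^ j) from h) j.sign
  rw [← zpow_mul, Int.mul_sign_self, zpow_natCast] at habs
  exact (lt_pow_apply hlt (Int.natAbs_ne_zero.2 hj)).ne' habs

section Preorder

variable [Preorder α] {f₁ f₂ : α ≃o α} {p q : α}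

theorem zpow_apply_notMem_Ioo_of_lt (hf₁ : ∀ x, x ≤ f₁ x) (hpq : q ≤ f₁ p)
    {m n : ℤ} (hmn : m < n) {x : α} (hm : (f₁ ^ m) x ∈ Ioo p q) : (f₁ ^ n) x ∉ Ioo p q :=
  fun hn => hn.2.not_ge <| calc
    q ≤ f₁ p := hpq
    _ ≤ f₁ ((f₁ ^ m) x) := f₁.monotone hm.1.le
    _ = (f₁ ^ (m + 1)) x := by rw [zpow_add_one, ← RelIso.mul_apply, Commute.self_zpow]
    _ ≤ (f₁ ^ n) x := monotone_zpow_apply hf₁ x hmn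

theorem disjoint_movedBy_zpow_conj (hf₁ : ∀ x, x ≤ f₁ x) (hpq : q ≤ f₁ p)
    (hf₂ : (fixedBy α f₂)ᶜ ⊆ Ioo p q) {m n : ℤ} (hmn : m ≠ n) :
    Disjoint (fixedBy α ((f₁ ^ m)⁻¹ * f₂ * f₁ ^ m))ᶜ (fixedBy α ((f₁ ^ n)⁻¹ * f₂ * f₁ ^ n))ᶜ := by
  refine Set.disjoint_left.2 fun x hm hn => ?_
  rw [mem_compl_iff, mem_fixedBy_inv_mul_mul_iff] at hm hn
  rcases hmn.lt_or_gt with hlt | hlt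
  · exact zpow_apply_notMem_Ioo_of_lt hf₁ hpq hlt (hf₂ hm) (hf₂ hn)
  · exact zpow_apply_notMem_Ioo_of_lt hf₁ hpq hlt (hf₂ hn) (hf₂ hm)

theorem commute_zpow_conj (hf₁ : ∀ x, x ≤ f₁ x) (hpq : q ≤ f₁ p)
    (hf₂ : (fixedBy α f₂)ᶜ ⊆ Ioo p q) (m n : ℤ) :
    Commute ((f₁ ^ m)⁻¹ * f₂ * f₁ ^ m) ((f₁ ^ n)⁻¹ * f₂ * f₁ ^ n) := by
  rcases eq_or_ne m n with rfl | hmn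
  · exact .refl _
  · exact commute_of_disjoint_movedBy (disjoint_movedBy_zpow_conj hf₁ hpq hf₂ hmn)

end Preorder

section LinearOrder

variable [LinearOrder α] {f₁ f₂ : α ≃o α} {p q : α}

theorem eq_zero_of_list_prod_zpow_conj_zpow_eq_one (hf₁ : ∀ x, x ≤ f₁ x)
    (hpq : q ≤ f₁ p) (hf₂ : (fixedBy α f₂)ᶜ ⊆ Ioo p q) (hf₂_ne : f₂ ≠ 1) (k : ℤ → ℤ)
    {l : List ℤ} (hl : l.Nodup)
    (hprod : (l.map fun n => ((f₁ ^ n)⁻¹ * f₂ * f₁ ^ n) ^ k n).prod = 1) {n : ℤ} (hn : n ∈ l) :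
    k n = 0 := by
  obtain ⟨c, hc⟩ : ∃ c, f₂ c ≠ c := not_forall.1 fun h => hf₂_ne (RelIso.ext h)
  set x := (f₁ ^ n).symm c
  have hx_moved : x ∉ fixedBy α ((f₁ ^ n)⁻¹ * f₂ * f₁ ^ n) := by
    rwa [mem_fixedBy_inv_mul_mul_iff, RelIso.smul_def, apply_symm_apply]
  have hx_fixed (m : ℤ) (hmn : m ≠ n) : x ∈ fixedBy α ((f₁ ^ m)⁻¹ * f₂ * f₁ ^ m) :=
    not_not.1 fun hm =>
      Set.disjoint_left.1 (disjoint_movedBy_zpow_conj hf₁ hpq hf₂ hmn) hm hx_moved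
  have hcomm (i j : ℤ) :
      Commute (((f₁ ^ i)⁻¹ * f₂ * f₁ ^ i) ^ k i) (((f₁ ^ j)⁻¹ * f₂ * f₁ ^ j) ^ k j) :=
    (commute_zpow_conj hf₁ hpq hf₂ i j).zpow_zpow _ _
  have hprod_x := list_prod_map_smul_eq_of_forall_ne (x := x) hl (List.pairwise_of_forall hcomm)
    hn fun m _ hmn => mem_fixedBy_zpow (hx_fixed m hmn) (k m)
  rw [hprod, one_smul] at hprod_x
  by_contra hk
  exact zpow_apply_ne_self hx_moved hk hprod_x.symm

end LinearOrder

end OrderIso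

theorem conjugates_free_abelian_basis_general
    (f₁ f₂ : Homeo) (a₁ b₁ a₂ b₂ : ℝ)
    (hf₁ : IsPosBump f₁ a₁ b₁) (hf₂ : IsPosBump f₂ a₂ b₂)
    (h₃ : ∀ x : unitInterval, (x : ℝ) = a₂ → b₂ ≤ (f₁ x : ℝ))
    (g : ℤ → Homeo) (hgdef : ∀ n : ℤ, g n = (f₁ ^ n)⁻¹ * f₂ * f₁ ^ n) :
    (∀ m n : ℤ, Commute (g m) (g n)) ∧
      ∀ k : ℤ →₀ ℤ,
        ((k.support.sort (· ≤ ·)).map (fun n => g n ^ (k n))).prod = 1 → k = 0 := by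
  obtain ⟨ha₂, hab, hb₂, -, hsupp⟩ := hf₂
  let p : unitInterval := ⟨a₂, ha₂, hab.le.trans hb₂⟩
  let q : unitInterval := ⟨b₂, ha₂.trans hab.le, hb₂⟩
  have hpq : q ≤ f₁ p := h₃ p rfl
  have hf₂_supp : (fixedBy unitInterval f₂)ᶜ ⊆ Ioo p q := fun x hx => (hsupp x).1 hx
  obtain ⟨c, hc⟩ := exists_between (show p < q from hab)
  have hf₂_ne : f₂ ≠ 1 := fun h => (hsupp c).2 hc (by rw [h]; rfl)
  obtain rfl : g = _ := funext hgdef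
  have hf₁_le : ∀ x, x ≤ f₁ x := hf₁.2.2.2.1
  refine ⟨OrderIso.commute_zpow_conj hf₁_le hpq hf₂_supp, fun k hk => ?_⟩
  refine Finsupp.support_eq_empty.1 <| Finset.eq_empty_of_forall_notMem fun n hn =>
    Finsupp.mem_support_iff.1 hn ?_
  exact OrderIso.eq_zero_of_list_prod_zpow_conj_zpow_eq_one hf₁_le hpq hf₂_supp hf₂_ne k
    (k.support.sort_nodup _) hk ((Finset.mem_sort _).2 hn)

/-- If the orbital of `f₂` lies inside a fundamental domain of `f₁`, then the conjugates
`g n = f₁⁻ⁿ f₂ f₁ⁿ` (for `n ∈ ℤ`) form a basis of a free abelian subgroup: they pairwise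
commute, and any product `∏ₙ (g n) ^ (k n)` over finitely many `n` (with integer exponents
`k n`, taken here in increasing order of `n`, which is immaterial since the factors commute)
that equals the identity has all exponents zero. -/
theorem conjugates_free_abelian_basis
    (f₁ f₂ : Homeo) (a₁ b₁ a₂ b₂ : ℝ)
    (hf₁ : IsPosBump f₁ a₁ b₁) (hf₂ : IsPosBump f₂ a₂ b₂)
    (h₁ : a₁ < a₂) (h₂ : b₂ < b₁)
    (h₃ : ∀ x : unitInterval, (x : ℝ) = a₂ → b₂ ≤ (f₁ x : ℝ))
    (g : ℤ → Homeo) (hgdef : ∀ n : ℤ, g n = (f₁ ^ n)⁻¹ * f₂ * f₁ ^ n) :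
    (∀ m n : ℤ, Commute (g m) (g n)) ∧
      ∀ k : ℤ →₀ ℤ,
        ((k.support.sort (· ≤ ·)).map (fun n => g n ^ (k n))).prod = 1 → k = 0 :=
  conjugates_free_abelian_basis_general f₁ f₂ a₁ b₁ a₂ b₂ hf₁ hf₂ h₃ g hgdef
end

section
/- Let {f_1, f_2} be a geometrically fast set of positive bumps on [0,1] with markers c_1, c_2 whose feet L_1 = (a_1,c_1), R_1 = [f_1(c_1),b_1), L_2 = (a_2,c_2), R_2 = [f_2(c_2),b_2) are pairwise disjoint and ordered L_1 < L_2 < R_1 < R_2. Then the subgroup of Homeo_+([0,1]) generated by {f_1, f_2} is isomorphic to Thompson's group F, i.e. to the group presented by two generators x_0, x_1 subject to the two relations [x_0 x_1^{-1}, x_0^{-1} x_1 x_0] = 1 and [x_0 x_1^{-1}, x_0^{-2} x_1 x_0^{2}] = 1. -/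
/-- `J` precedes `J'`: every point of `J` is less than every point of `J'`. -/
def Precedes (J J' : Set ℝ) : Prop := ∀ x ∈ J, ∀ y ∈ J', x < y

/-- The two defining relators of Thompson's group `F`:
`[x₀x₁⁻¹, x₀⁻¹x₁x₀]` and `[x₀x₁⁻¹, x₀⁻²x₁x₀²]`, where `[g,h] = g⁻¹h⁻¹gh`. -/
def thompsonFRels : Set (FreeGroup (Fin 2)) :=
  letI x₀ : FreeGroup (Fin 2) := FreeGroup.of 0
  letI x₁ : FreeGroup (Fin 2) := FreeGroup.of 1
  letI g : FreeGroup (Fin 2) := x₀ * x₁⁻¹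
  { g⁻¹ * (x₀⁻¹ * x₁ * x₀)⁻¹ * g * (x₀⁻¹ * x₁ * x₀),
    g⁻¹ * (x₀⁻¹ ^ 2 * x₁ * x₀ ^ 2)⁻¹ * g * (x₀⁻¹ ^ 2 * x₁ * x₀ ^ 2) }

theorem inv_mul_inv_mul_mul_eq_one_iff {G : Type*} [Group G] {g h : G} :
    g⁻¹ * h⁻¹ * g * h = 1 ↔ Commute g h := by
  rw [← Commute.inv_inv_iff, ← commutatorElement_eq_one_iff_commute, commutatorElement_def,
    inv_inv, inv_inv]

theorem lift_thompsonFRels_eq_one {G : Type*} [Group G] {a b : G}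
    (h₁ : Commute (a * b⁻¹) (a⁻¹ * b * a)) (h₂ : Commute (a * b⁻¹) ((a ^ 2)⁻¹ * b * a ^ 2)) :
    ∀ r ∈ thompsonFRels, FreeGroup.lift ![a, b] r = 1 := by
  simp only [thompsonFRels, Set.mem_insert_iff, Set.mem_singleton_iff]
  rintro r (rfl | rfl)
  · simpa using inv_mul_inv_mul_mul_eq_one_iff.mpr h₁
  · simpa using inv_mul_inv_mul_mul_eq_one_iff.mpr h₂

theorem PresentedGroup.range_toGroup {ι G : Type*} [Group G] {rels : Set (FreeGroup ι)}
    {f : ι → G} (h : ∀ r ∈ rels, FreeGroup.lift f r = 1) :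
    (PresentedGroup.toGroup h).range = Subgroup.closure (Set.range f) := by
  rw [MonoidHom.range_eq_map, ← PresentedGroup.closure_range_of, MonoidHom.map_closure,
    ← Set.range_comp]
  congr 2
  funext i
  exact PresentedGroup.toGroup.of h

theorem Subgroup.closure_pair_mul_left {G : Type*} [Group G] (a b : G) :
    Subgroup.closure {a * b, a} = Subgroup.closure {a, b} := by
  have ha : a ∈ Subgroup.closure {a, b} := Subgroup.subset_closure (.inl rfl)
  have hb : b ∈ Subgroup.closure {a, b} := Subgroup.subset_closure (.inr rfl)
  have hab : a * b ∈ Subgroup.closure {a * b, a} := Subgroup.subset_closure (.inl rfl)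
  have ha' : a ∈ Subgroup.closure {a * b, a} := Subgroup.subset_closure (.inr rfl)
  refine le_antisymm (Subgroup.closure_le _ |>.mpr ?_) (Subgroup.closure_le _ |>.mpr ?_)
  · rintro _ (rfl | rfl)
    exacts [mul_mem ha hb, ha]
  · rintro _ (rfl | rfl)
    · exact ha'
    · simpa using mul_mem (inv_mem ha') hab

namespace ThompsonF

local notation "F" => PresentedGroup thompsonFRels

def x : ℕ → F
  | 0 => .of 0
  | 1 => .of 1
  | n + 2 => (.of 0)⁻¹ * x (n + 1) * .of 0

theorem x_add_two (n : ℕ) : x (n + 2) = (x 0)⁻¹ * x (n + 1) * x 0 := rfl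

theorem x_add_one_add (n j : ℕ) : x (n + 1 + j) = (x 0 ^ j)⁻¹ * x (n + 1) * x 0 ^ j := by
  induction j with
  | zero => simp
  | succ j ih =>
    rw [show n + 1 + (j + 1) = n + j + 2 by omega, x_add_two, show n + j + 1 = n + 1 + j by omega,
      ih, pow_succ]
    group

theorem x_succ (n : ℕ) : x (n + 1) = (x 0 ^ n)⁻¹ * x 1 * x 0 ^ n := by
  simpa [add_comm] using x_add_one_add 0 n

theorem commute_x_two : Commute (x 0 * (x 1)⁻¹) (x 2) :=
  inv_mul_inv_mul_mul_eq_one_iff.mp (PresentedGroup.one_of_mem (Set.mem_insert _ _))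

theorem commute_x_three : Commute (x 0 * (x 1)⁻¹) (x 3) := by
  have h : (x 0 * (x 1)⁻¹)⁻¹ * ((x 0)⁻¹ ^ 2 * x 1 * x 0 ^ 2)⁻¹ * (x 0 * (x 1)⁻¹) *
      ((x 0)⁻¹ ^ 2 * x 1 * x 0 ^ 2) = 1 :=
    PresentedGroup.one_of_mem (Set.mem_insert_of_mem _ rfl)
  rw [inv_mul_inv_mul_mul_eq_one_iff, inv_pow, ← x_succ] at h
  exact h

theorem inv_x_one_mul_mul_x_one {y : F} (h : Commute (x 0 * (x 1)⁻¹) y) :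
    (x 1)⁻¹ * y * x 1 = (x 0)⁻¹ * y * x 0 :=
  calc (x 1)⁻¹ * y * x 1 = (x 0)⁻¹ * ((x 0 * (x 1)⁻¹) * y) * (x 0 * (x 1)⁻¹)⁻¹ * x 0 := by group
    _ = (x 0)⁻¹ * (y * (x 0 * (x 1)⁻¹)) * (x 0 * (x 1)⁻¹)⁻¹ * x 0 := by rw [h.eq]
    _ = (x 0)⁻¹ * y * x 0 := by group

theorem commute_x_add_two (n : ℕ) : Commute (x 0 * (x 1)⁻¹) (x (n + 2)) := by
  suffices ∀ n, Commute (x 0 * (x 1)⁻¹) (x (n + 2)) ∧ Commute (x 0 * (x 1)⁻¹) (x (n + 3)) from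
    (this n).1
  intro n
  induction n with
  | zero => exact ⟨commute_x_two, commute_x_three⟩
  | succ n ih =>
    have h₃ : x (n + 3) = (x 1)⁻¹ * x (n + 2) * x 1 :=
      ((inv_x_one_mul_mul_x_one ih.1).trans (x_add_two (n + 1)).symm).symm
    have hconj : x (n + 4) = (x 2)⁻¹ * x (n + 3) * x 2 :=
      calc x (n + 4) = (x 0)⁻¹ * ((x 1)⁻¹ * x (n + 2) * x 1) * x 0 := by rw [← h₃]; rfl
        _ = ((x 0)⁻¹ * x 1 * x 0)⁻¹ * ((x 0)⁻¹ * x (n + 2) * x 0) * ((x 0)⁻¹ * x 1 * x 0) := by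
          group
        _ = (x 2)⁻¹ * x (n + 3) * x 2 := rfl
    exact ⟨ih.2, hconj ▸ (commute_x_two.inv_right.mul_right ih.2).mul_right commute_x_two⟩

theorem inv_x_one_mul_x_add_two_mul_x_one (n : ℕ) : (x 1)⁻¹ * x (n + 2) * x 1 = x (n + 3) :=
  (inv_x_one_mul_mul_x_one (commute_x_add_two n)).trans (x_add_two (n + 1)).symm

theorem x_mul_x_of_lt {h k : ℕ} (hk : h < k) : x k * x h = x h * x (k + 1) := by
  obtain ⟨d, rfl⟩ := Nat.exists_eq_add_of_lt hk
  rcases h with _ | j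
  · rw [zero_add, x_add_two]
    group
  · -- conjugate the case `h = 1` by `x₀ ^ j`
    have e₁ := x_add_one_add 0 j
    have e₂ := x_add_one_add (d + 1) j
    have e₃ := x_add_one_add (d + 2) j
    rw [zero_add, add_comm 1 j] at e₁
    rw [show j + 1 + d + 1 = d + 1 + 1 + j by omega,
      show d + 1 + 1 + j + 1 = d + 2 + 1 + j by omega, e₁, e₂, e₃,
      ← inv_x_one_mul_x_add_two_mul_x_one]
    group

def word (l : List ℕ) : F := (l.map x).prod

@[simp] theorem word_nil : word [] = 1 := rfl

@[simp] theorem word_cons (k : ℕ) (l : List ℕ) : word (k :: l) = x k * word l :=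
  List.prod_cons

@[simp] theorem word_append (l₁ l₂ : List ℕ) : word (l₁ ++ l₂) = word l₁ * word l₂ := by
  simp [word]

/-- Inserts `k` into a word, commuting `x_k` past smaller letters by `x_k x_h = x_h x_(k+1)`. -/
def shiftInsert (k : ℕ) : List ℕ → List ℕ
  | [] => [k]
  | h :: t => if k ≤ h then k :: h :: t else h :: shiftInsert (k + 1) t

theorem mem_shiftInsert {m k : ℕ} {l : List ℕ} (hm : m ∈ shiftInsert k l) : k ≤ m ∨ m ∈ l := by
  induction l generalizing k with
  | nil => simp_all [shiftInsert]
  | cons h t ih =>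
    unfold shiftInsert at hm
    split_ifs at hm <;> grind

theorem pairwise_shiftInsert (k : ℕ) {l : List ℕ} (hl : l.Pairwise (· ≤ ·)) :
    (shiftInsert k l).Pairwise (· ≤ ·) := by
  induction l generalizing k with
  | nil => simp [shiftInsert]
  | cons h t ih =>
    rw [List.pairwise_cons] at hl
    unfold shiftInsert
    split_ifs with hk
    · exact List.pairwise_cons.mpr ⟨by grind, List.pairwise_cons.mpr hl⟩
    · refine List.pairwise_cons.mpr ⟨fun m hm => ?_, ih _ hl.2⟩
      rcases mem_shiftInsert hm with hm | hm
      · omega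
      · exact hl.1 m hm

theorem word_shiftInsert (k : ℕ) (l : List ℕ) : word (shiftInsert k l) = x k * word l := by
  induction l generalizing k with
  | nil => simp [shiftInsert]
  | cons h t ih =>
    unfold shiftInsert
    split_ifs with hk
    · rfl
    · rw [word_cons, ih, word_cons, ← mul_assoc, ← mul_assoc, ← x_mul_x_of_lt (not_le.mp hk)]

def shiftSort : List ℕ → List ℕ
  | [] => []
  | h :: t => shiftInsert h (shiftSort t)

theorem pairwise_shiftSort (l : List ℕ) : (shiftSort l).Pairwise (· ≤ ·) := by
  induction l with
  | nil => exact List.Pairwise.nil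
  | cons h t ih => exact pairwise_shiftInsert h ih

theorem word_shiftSort (l : List ℕ) : word (shiftSort l) = word l := by
  induction l with
  | nil => rfl
  | cons h t ih => rw [shiftSort, word_shiftInsert, ih, word_cons]

theorem exists_inv_x_mul_word (n : ℕ) (l : List ℕ) :
    ∃ p q : List ℕ, (x n)⁻¹ * word l = word p * (word q)⁻¹ := by
  induction l generalizing n with
  | nil => exact ⟨[], [n], by simp⟩
  | cons h t ih =>
    rcases lt_trichotomy n h with hnh | rfl | hhn
    · obtain ⟨p, q, hpq⟩ := ih n
      refine ⟨(h + 1) :: p, q, ?_⟩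
      rw [word_cons, word_cons, mul_assoc, ← hpq, ← mul_assoc, ← mul_assoc]
      congr 1
      rw [inv_mul_eq_iff_eq_mul, ← mul_assoc, ← x_mul_x_of_lt hnh, mul_inv_cancel_right]
    · exact ⟨t, [], by simp⟩
    · obtain ⟨p, q, hpq⟩ := ih (n + 1)
      refine ⟨h :: p, q, ?_⟩
      rw [word_cons, word_cons, mul_assoc, ← hpq, ← mul_assoc, ← mul_assoc]
      congr 1
      rw [inv_mul_eq_iff_eq_mul, ← mul_assoc, x_mul_x_of_lt hhn, mul_inv_cancel_right]

theorem exists_eq_word_mul_inv_word (g : F) : ∃ p q : List ℕ, g = word p * (word q)⁻¹ := by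
  have hrange : Set.range (PresentedGroup.of : Fin 2 → F) = {x 0, x 1} := by
    ext y
    simp [Fin.exists_fin_two, x, eq_comm]
  have hg : g ∈ Subgroup.closure {x 0, x 1} := by
    simp [← hrange, PresentedGroup.closure_range_of]
  induction hg using Subgroup.closure_induction_left with
  | one => exact ⟨[], [], by simp⟩
  | mul_left y hy g _ ih =>
    obtain ⟨p, q, rfl⟩ := ih
    rcases hy with rfl | rfl
    · exact ⟨0 :: p, q, by simp [mul_assoc]⟩
    · exact ⟨1 :: p, q, by simp [mul_assoc]⟩
  | inv_mul_cancel y hy g _ ih =>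
    obtain ⟨p, q, rfl⟩ := ih
    obtain ⟨n, rfl⟩ : ∃ n, y = x n := by rcases hy with rfl | rfl <;> exact ⟨_, rfl⟩
    obtain ⟨p', q', h⟩ := exists_inv_x_mul_word n p
    exact ⟨p', q ++ q', by rw [← mul_assoc, h, word_append, mul_inv_rev, mul_assoc]⟩

theorem injective_of_word_injective {G : Type*} [Group G] (φ : F →* G)
    (h : ∀ p q : List ℕ, p.Pairwise (· ≤ ·) → q.Pairwise (· ≤ ·) →
      φ (word p) = φ (word q) → p = q) :
    Function.Injective φ := by
  refine (injective_iff_map_eq_one φ).mpr fun g hg => ?_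
  obtain ⟨p, q, rfl⟩ := exists_eq_word_mul_inv_word g
  rw [map_mul, map_inv, mul_inv_eq_one, ← word_shiftSort p, ← word_shiftSort q] at hg
  rw [← word_shiftSort p, ← word_shiftSort q,
    h _ _ (pairwise_shiftSort p) (pairwise_shiftSort q) hg, mul_inv_cancel]

end ThompsonF

theorem commute_of_forall_apply_eq_or_apply_eq {β : Type*} [LE β] {u v : β ≃o β}
    (h : ∀ t, u t = t ∨ v t = t) : Commute u v :=
  Commute.of_map (f := MulAction.toPermHom (β ≃o β) β) MulAction.toPerm_injective
    (Equiv.Perm.Disjoint.commute h)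

section PositiveOrderIso

variable {α : Type*} [PartialOrder α]

theorem conj_apply_eq_self_iff (B C : α ≃o α) (t : α) :
    (C⁻¹ * B * C) t = t ↔ B (C t) = C t := by
  rw [RelIso.mul_apply, RelIso.mul_apply]
  exact (C⁻¹).injective.eq_iff' (RelIso.inv_apply_self C t)

theorem le_pow_apply_s5 {A : α ≃o α} (hA : ∀ t, t ≤ A t) (n : ℕ) (t : α) : t ≤ (A ^ n) t := by
  induction n with
  | zero => exact le_rfl
  | succ n ih =>
    rw [pow_succ', RelIso.mul_apply]
    exact ih.trans (hA _)

theorem le_conj_apply {B : α ≃o α} (hB : ∀ t, t ≤ B t) (C : α ≃o α) (t : α) :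
    t ≤ (C⁻¹ * B * C) t := by
  calc t = C⁻¹ (C t) := (RelIso.inv_apply_self C t).symm
    _ ≤ C⁻¹ (B (C t)) := (C⁻¹).monotone (hB _)

theorem le_prod_map_apply {g : ℕ → α ≃o α} (hg : ∀ n t, t ≤ g n t) (l : List ℕ) (t : α) :
    t ≤ (l.map g).prod t := by
  induction l with
  | nil => exact le_rfl
  | cons k l ih => exact ih.trans (hg k _)

theorem prod_map_apply_eq_self {g : ℕ → α ≃o α} {l : List ℕ} {t : α}
    (h : ∀ j ∈ l, g j t = t) : (l.map g).prod t = t := by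
  induction l with
  | nil => rfl
  | cons k l ih =>
    rw [List.map_cons, List.prod_cons, RelIso.mul_apply, ih (fun j hj => h j (.tail _ hj)),
      h k (.head _)]

section SortedWords

variable {g : ℕ → α ≃o α}

theorem prod_map_cons_ne_of_forall_lt (hg : ∀ n t, t ≤ g n t)
    (hsep : ∀ k, ∃ t, t < g k t ∧ ∀ j, k < j → g j t = t) {k : ℕ} {p q : List ℕ}
    (hq : ∀ j ∈ q, k < j) :
    ((k :: p).map g).prod ≠ (q.map g).prod := by
  obtain ⟨t, hmove, hfix⟩ := hsep k
  intro h
  have hlt : t < ((k :: p).map g).prod t := by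
    rw [List.map_cons, List.prod_cons, RelIso.mul_apply]
    rcases (le_prod_map_apply hg p t).lt_or_eq with hlt | heq
    · exact hlt.trans_le (hg k _)
    · rwa [← heq]
  rw [h, prod_map_apply_eq_self fun j hj => hfix j (hq j hj)] at hlt
  exact hlt.false

theorem eq_of_prod_map_eq (hg : ∀ n t, t ≤ g n t)
    (hsep : ∀ k, ∃ t, t < g k t ∧ ∀ j, k < j → g j t = t) {p q : List ℕ}
    (hp : p.Pairwise (· ≤ ·)) (hq : q.Pairwise (· ≤ ·))
    (h : (p.map g).prod = (q.map g).prod) : p = q := by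
  induction p generalizing q with
  | nil =>
    cases q with
    | nil => rfl
    | cons m q => exact absurd h.symm (prod_map_cons_ne_of_forall_lt hg hsep (by simp))
  | cons k p ih =>
    cases q with
    | nil => exact absurd h (prod_map_cons_ne_of_forall_lt hg hsep (by simp))
    | cons m q =>
      rw [List.pairwise_cons] at hp hq
      rcases lt_trichotomy k m with hkm | rfl | hmk
      · refine absurd h (prod_map_cons_ne_of_forall_lt hg hsep fun j hj => ?_)
        rcases List.mem_cons.mp hj with rfl | hj
        exacts [hkm, hkm.trans_le (hq.1 j hj)]
      · rw [List.map_cons, List.prod_cons, List.map_cons, List.prod_cons] at h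
        rw [ih hp.2 hq.2 (mul_left_cancel h)]
      · refine absurd h.symm (prod_map_cons_ne_of_forall_lt hg hsep fun j hj => ?_)
        rcases List.mem_cons.mp hj with rfl | hj
        exacts [hmk, hmk.trans_le (hp.1 j hj)]

end SortedWords

/-- Sufficient conditions for `x₀ ↦ A`, `x₁ ↦ B` to define a faithful action of Thompson's
group `F` on `α`. -/
structure IsThompsonPair (A B : α ≃o α) (p q : α) : Prop where
  self_le_A : ∀ t, t ≤ A t
  self_le_B : ∀ t, t ≤ B t
  B_apply_eq_of_le : ∀ t, p ≤ t → B t = t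
  lt_B_apply : q < B q
  le_A_apply : p ≤ A q
  le_A_apply_of_ne : ∀ t, (A * B⁻¹) t ≠ t → p ≤ A t

namespace IsThompsonPair

open ThompsonF

variable {A B : α ≃o α} {p q : α}

theorem commute_mul_inv_conj (h : IsThompsonPair A B p q) (n : ℕ) :
    Commute (A * B⁻¹) ((A ^ (n + 1))⁻¹ * B * A ^ (n + 1)) := by
  refine commute_of_forall_apply_eq_or_apply_eq fun t => or_iff_not_imp_left.mpr fun ht => ?_
  rw [conj_apply_eq_self_iff, pow_succ, RelIso.mul_apply]
  exact h.B_apply_eq_of_le _ ((h.le_A_apply_of_ne t ht).trans (le_pow_apply_s5 h.self_le_A n _))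

theorem lift_eq_one (h : IsThompsonPair A B p q) :
    ∀ r ∈ thompsonFRels, FreeGroup.lift ![A, B] r = 1 :=
  lift_thompsonFRels_eq_one (by simpa using h.commute_mul_inv_conj 0) (h.commute_mul_inv_conj 1)

theorem B_apply_pow_apply (h : IsThompsonPair A B p q) (n : ℕ) :
    B ((A ^ n) (A q)) = (A ^ n) (A q) :=
  h.B_apply_eq_of_le _ (h.le_A_apply.trans (le_pow_apply_s5 h.self_le_A n _))

theorem toGroup_x_zero (h : IsThompsonPair A B p q) :
    PresentedGroup.toGroup h.lift_eq_one (x 0) = A :=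
  PresentedGroup.toGroup.of h.lift_eq_one

theorem toGroup_x_succ (h : IsThompsonPair A B p q) (n : ℕ) :
    PresentedGroup.toGroup h.lift_eq_one (x (n + 1)) = (A ^ n)⁻¹ * B * A ^ n := by
  rw [x_succ, map_mul, map_mul, map_inv, map_pow, h.toGroup_x_zero]
  exact congrArg (_ * · * _) (PresentedGroup.toGroup.of h.lift_eq_one)

theorem self_le_toGroup_x_apply (h : IsThompsonPair A B p q) (n : ℕ) (t : α) :
    t ≤ PresentedGroup.toGroup h.lift_eq_one (x n) t := by
  cases n with
  | zero =>
    rw [h.toGroup_x_zero]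
    exact h.self_le_A t
  | succ n =>
    rw [h.toGroup_x_succ]
    exact le_conj_apply h.self_le_B _ t

/-- `x k` moves `A q` (for `k = 0`) or `A⁻ᵏ⁺¹ q` (for `k ≥ 1`), which all later `x j` fix. -/
theorem exists_lt_toGroup_x_apply (h : IsThompsonPair A B p q) (k : ℕ) :
    ∃ t, t < PresentedGroup.toGroup h.lift_eq_one (x k) t ∧
      ∀ j, k < j → PresentedGroup.toGroup h.lift_eq_one (x j) t = t := by
  cases k with
  | zero =>
    refine ⟨A q, ?_, fun j hj => ?_⟩
    · have hAq : A q ≠ q := fun hAq =>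
        h.lt_B_apply.ne' (h.B_apply_eq_of_le q (hAq ▸ h.le_A_apply))
      rw [h.toGroup_x_zero]
      exact (h.self_le_A _).lt_of_ne fun e => hAq (A.injective e.symm)
    · obtain ⟨j, rfl⟩ := Nat.exists_eq_add_of_lt hj
      rw [h.toGroup_x_succ, conj_apply_eq_self_iff]
      exact h.B_apply_pow_apply _
  | succ n =>
    refine ⟨(A ^ n)⁻¹ q, ?_, fun j hj => ?_⟩
    · rw [h.toGroup_x_succ, RelIso.mul_apply, RelIso.mul_apply, RelIso.apply_inv_self]
      exact (A ^ n)⁻¹.lt_iff_lt.mpr h.lt_B_apply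
    · obtain ⟨d, rfl⟩ : ∃ d, j = d + 1 + n + 1 := ⟨j - n - 2, by omega⟩
      rw [h.toGroup_x_succ, conj_apply_eq_self_iff, pow_add, RelIso.mul_apply,
        RelIso.apply_inv_self, pow_succ, RelIso.mul_apply]
      exact h.B_apply_pow_apply d

theorem toGroup_injective (h : IsThompsonPair A B p q) :
    Function.Injective (PresentedGroup.toGroup h.lift_eq_one) := by
  refine injective_of_word_injective _ fun l₁ l₂ hl₁ hl₂ hw => ?_
  simp only [word, map_list_prod, List.map_map] at hw
  exact eq_of_prod_map_eq h.self_le_toGroup_x_apply h.exists_lt_toGroup_x_apply hl₁ hl₂ hw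

theorem range_toGroup (h : IsThompsonPair A B p q) :
    (PresentedGroup.toGroup h.lift_eq_one).range = Subgroup.closure {A, B} := by
  rw [PresentedGroup.range_toGroup, Matrix.range_cons_cons_empty]

noncomputable def mulEquiv (h : IsThompsonPair A B p q) :
    Subgroup.closure {A, B} ≃* PresentedGroup thompsonFRels :=
  ((MonoidHom.ofInjective h.toGroup_injective).trans (MulEquiv.subgroupCongr h.range_toGroup)).symm

end IsThompsonPair

end PositiveOrderIso

namespace IsPosBump

variable {f : Homeo} {a b : ℝ}

theorem le_apply (hf : IsPosBump f a b) (t : unitInterval) : t ≤ f t := hf.2.2.2.1 t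

theorem left_lt_of_apply_ne (hf : IsPosBump f a b) {t : unitInterval} (ht : f t ≠ t) :
    a < t :=
  ((hf.2.2.2.2 t).mp ht).1

theorem apply_eq_of_right_le (hf : IsPosBump f a b) {t : unitInterval} (ht : b ≤ t) :
    f t = t :=
  not_not.mp fun hne => ((hf.2.2.2.2 t).mp hne).2.not_ge ht

theorem lt_apply (hf : IsPosBump f a b) {t : unitInterval} (ha : a < t) (hb : t < b) :
    t < f t :=
  (hf.le_apply t).lt_of_ne (Ne.symm ((hf.2.2.2.2 t).mpr ⟨ha, hb⟩))

theorem apply_lt_right (hf : IsPosBump f a b) {t : unitInterval} (ht : t < b) : f t < b := by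
  by_contra! hle
  have hfix : f (f t) = f t := hf.apply_eq_of_right_le hle
  exact ht.not_ge (f.injective hfix ▸ hle)

end IsPosBump

theorem Precedes.csSup_le_csInf {J J' : Set ℝ} (h : Precedes J J') (hJ : J.Nonempty)
    (hJ' : J'.Nonempty) : sSup J ≤ sInf J' :=
  csSup_le hJ fun x hx => le_csInf hJ' fun y hy => (h x hx y hy).le

theorem isThompsonPair_of_feet {f₁ f₂ : Homeo} {a₁ b₁ a₂ b₂ : ℝ} {c₁ c₂ : unitInterval}
    (hf₁ : IsPosBump f₁ a₁ b₁) (hf₂ : IsPosBump f₂ a₂ b₂) (hc₁ : a₁ < c₁) (hc₂ : a₂ < c₂)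
    (hR₁ : f₁ c₁ < b₁) (hL₁L₂ : (c₁ : ℝ) ≤ a₂) (hL₂R₁ : (c₂ : ℝ) ≤ f₁ c₁) (hR₁R₂ : b₁ ≤ f₂ c₂) :
    IsThompsonPair (f₁ * f₂) f₁ (f₂ c₂) c₂ where
  self_le_A t := (hf₂.le_apply t).trans (hf₁.le_apply _)
  self_le_B := hf₁.le_apply
  B_apply_eq_of_le _ ht := hf₁.apply_eq_of_right_le (hR₁R₂.trans ht)
  lt_B_apply := hf₁.lt_apply (hc₁.trans_le (hL₁L₂.trans hc₂.le)) (hL₂R₁.trans_lt hR₁)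
  le_A_apply := hf₁.le_apply _
  le_A_apply_of_ne t ht := by
    have hmoved : f₂ (f₁⁻¹ t) ≠ f₁⁻¹ t := fun hfix => ht <| by
      rw [RelIso.mul_apply, RelIso.mul_apply, hfix, RelIso.apply_inv_self]
    have hc₁t : c₁ < f₁⁻¹ t := hL₁L₂.trans_lt (hf₂.left_lt_of_apply_ne hmoved)
    have hc₂t : c₂ < t :=
      calc c₂ ≤ f₁ c₁ := hL₂R₁
        _ < f₁ (f₁⁻¹ t) := f₁.lt_iff_lt.mpr hc₁t
        _ = t := RelIso.apply_inv_self f₁ t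
    exact (f₂.lt_iff_lt.mpr hc₂t).le.trans (hf₁.le_apply _)

theorem fast_pair_overlapping_iso_thompsonF_general
    (f₁ f₂ : Homeo) (a₁ b₁ a₂ b₂ : ℝ) (c₁ c₂ : unitInterval)
    (hf₁ : IsPosBump f₁ a₁ b₁) (hf₂ : IsPosBump f₂ a₂ b₂)
    (hc₁ : a₁ < (c₁ : ℝ) ∧ (c₁ : ℝ) < b₁) (hc₂ : a₂ < (c₂ : ℝ) ∧ (c₂ : ℝ) < b₂)
    -- the four feet
    (L₁ R₁ L₂ R₂ : Set ℝ)
    (hL₁ : L₁ = Set.Ioo a₁ (c₁ : ℝ)) (hR₁ : R₁ = Set.Ico ((f₁ c₁ : unitInterval) : ℝ) b₁)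
    (hL₂ : L₂ = Set.Ioo a₂ (c₂ : ℝ)) (hR₂ : R₂ = Set.Ico ((f₂ c₂ : unitInterval) : ℝ) b₂)
    -- pairwise disjoint and ordered L₁ < L₂ < R₁ < R₂
    (ho₁ : Precedes L₁ L₂) (ho₂ : Precedes L₂ R₁) (ho₃ : Precedes R₁ R₂) :
    Nonempty ((Subgroup.closure {f₁, f₂} : Subgroup Homeo) ≃* PresentedGroup thompsonFRels) := by
  subst hL₁ hR₁ hL₂ hR₂
  have hb₁ := hf₁.apply_lt_right hc₁.2
  have hb₂ := hf₂.apply_lt_right hc₂.2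
  have hL₁L₂ := ho₁.csSup_le_csInf (Set.nonempty_Ioo.2 hc₁.1) (Set.nonempty_Ioo.2 hc₂.1)
  have hL₂R₁ := ho₂.csSup_le_csInf (Set.nonempty_Ioo.2 hc₂.1) (Set.nonempty_Ico.2 hb₁)
  have hR₁R₂ := ho₃.csSup_le_csInf (Set.nonempty_Ico.2 hb₁) (Set.nonempty_Ico.2 hb₂)
  rw [csSup_Ioo hc₁.1, csInf_Ioo hc₂.1] at hL₁L₂
  rw [csSup_Ioo hc₂.1, csInf_Ico hb₁] at hL₂R₁
  rw [csSup_Ico hb₁, csInf_Ico hb₂] at hR₁R₂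
  have h := isThompsonPair_of_feet hf₁ hf₂ hc₁.1 hc₂.1 hb₁ hL₁L₂ hL₂R₁ hR₁R₂
  exact ⟨(MulEquiv.subgroupCongr (Subgroup.closure_pair_mul_left f₁ f₂).symm).trans h.mulEquiv⟩

/-- If `{f₁, f₂}` is a geometrically fast pair of positive bumps whose feet are pairwise
disjoint and ordered `L₁ < L₂ < R₁ < R₂`, then `⟨f₁, f₂⟩` is isomorphic to Thompson's
group `F` (presented by two generators and two commutator relations). -/
theorem fast_pair_overlapping_iso_thompsonF
    (f₁ f₂ : Homeo) (a₁ b₁ a₂ b₂ : ℝ) (c₁ c₂ : unitInterval)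
    (hf₁ : IsPosBump f₁ a₁ b₁) (hf₂ : IsPosBump f₂ a₂ b₂)
    (hc₁ : a₁ < (c₁ : ℝ) ∧ (c₁ : ℝ) < b₁) (hc₂ : a₂ < (c₂ : ℝ) ∧ (c₂ : ℝ) < b₂)
    -- the four feet
    (L₁ R₁ L₂ R₂ : Set ℝ)
    (hL₁ : L₁ = Set.Ioo a₁ (c₁ : ℝ)) (hR₁ : R₁ = Set.Ico ((f₁ c₁ : unitInterval) : ℝ) b₁)
    (hL₂ : L₂ = Set.Ioo a₂ (c₂ : ℝ)) (hR₂ : R₂ = Set.Ico ((f₂ c₂ : unitInterval) : ℝ) b₂)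
    -- pairwise disjoint and ordered L₁ < L₂ < R₁ < R₂
    (hd : Set.Pairwise {0, 1, 2, 3} (fun i j => Disjoint (![L₁, L₂, R₁, R₂] i) (![L₁, L₂, R₁, R₂] j)))
    (ho₁ : Precedes L₁ L₂) (ho₂ : Precedes L₂ R₁) (ho₃ : Precedes R₁ R₂) :
    Nonempty ((Subgroup.closure {f₁, f₂} : Subgroup Homeo) ≃* PresentedGroup thompsonFRels) :=
  fast_pair_overlapping_iso_thompsonF_general f₁ f₂ a₁ b₁ a₂ b₂ c₁ c₂ hf₁ hf₂ hc₁ hc₂ L₁ R₁ L₂ R₂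
    hL₁ hR₁ hL₂ hR₂ ho₁ ho₂ ho₃
end

section
/- Let B = {b_1,…,b_n} be a geometrically fast set of positive bumps on [0,1] with markers M = {c_1,…,c_n} witnessing fastness. If w is a word over B^± whose evaluation is the identity homeomorphism of [0,1], then for every point x ∈ M⟨B⟩, the image of the simply local reduction w_x under the canonical map from words over B^± to the free group on n generators (sending the letter b_i^{±1} to the i-th generator to the power ±1) is the trivial element; that is, w_x freely reduces to the empty word. -/
open scoped Classical

/-- The feet of a bump `f` with orbital `(a,b)` and marker `c`: the source (`false`)
is `(a,c)` and the destination (`true`) is `[f(c), b)`. -/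
def Foot (f : Homeo) (a b : ℝ) (c : unitInterval) : Bool → Set ℝ
  | false => Set.Ioo a (c : ℝ)
  | true => Set.Ico ((f c : unitInterval) : ℝ) b

/-- The evaluation of a formal letter: `(i, true)` stands for `b i`, and `(i, false)`
for `(b i)⁻¹` (matching the convention of `FreeGroup.mk`). -/
def letterEval {n : ℕ} (b : Fin n → Homeo) (ℓ : Fin n × Bool) : Homeo :=
  if ℓ.2 then b ℓ.1 else (b ℓ.1)⁻¹

/-- Evaluation of a word at a point, applying the letters from left to right. -/
def wordApply {n : ℕ} (b : Fin n → Homeo) : List (Fin n × Bool) → unitInterval → unitInterval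
  | [], x => x
  | ℓ :: rest, x => wordApply b rest (letterEval b ℓ x)

/-- The simply local reduction `w_x` of a word `w` at a point `x`: scan the letters left
to right, deleting a letter exactly when the current image of `x` is fixed by it. -/
noncomputable def slr {n : ℕ} (b : Fin n → Homeo) :
    List (Fin n × Bool) → unitInterval → List (Fin n × Bool)
  | [], _ => []
  | ℓ :: rest, x =>
      if letterEval b ℓ x = x then slr b rest x
      else ℓ :: slr b rest (letterEval b ℓ x)

/-!
Ping-pong. If a letter moves a point `y` that does not lie in the foot of its inverse, it
carries `y` into its own foot; so along a freely reduced word every letter of which moves the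
running point, a start outside all feet ends inside a foot. Free reduction keeps the property
that every letter moves the running point, and the simply local reduction of any word has it.
A marker of least value in an orbit lies in no foot, and conjugating `w` by a word `u` that
carries it to `x` gives a loop at that marker whose simply local reduction is
`u' · w_x · u'⁻¹`, with `u'` the simply local reduction of `u` at the marker; the freely
reduced form of that loop must be empty.
-/

namespace GeometricallyFast

open FreeGroup

variable {n : ℕ} {b : Fin n → Homeo}

def EachLetterMoves (b : Fin n → Homeo) : List (Fin n × Bool) → unitInterval → Prop
  | [], _ => True
  | ℓ :: w, x => letterEval b ℓ x ≠ x ∧ EachLetterMoves b w (letterEval b ℓ x)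

@[simp] lemma eachLetterMoves_nil (x : unitInterval) : EachLetterMoves b [] x := trivial

@[simp] lemma eachLetterMoves_cons (ℓ : Fin n × Bool) (w : List (Fin n × Bool))
    (x : unitInterval) :
    EachLetterMoves b (ℓ :: w) x ↔
      letterEval b ℓ x ≠ x ∧ EachLetterMoves b w (letterEval b ℓ x) :=
  Iff.rfl

@[simp] lemma wordApply_nil (x : unitInterval) : wordApply b [] x = x := rfl

@[simp] lemma wordApply_cons (ℓ : Fin n × Bool) (w : List (Fin n × Bool)) (x : unitInterval) :
    wordApply b (ℓ :: w) x = wordApply b w (letterEval b ℓ x) := rfl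

lemma wordApply_append (u w : List (Fin n × Bool)) (x : unitInterval) :
    wordApply b (u ++ w) x = wordApply b w (wordApply b u x) := by
  induction u generalizing x with
  | nil => rfl
  | cons ℓ u ih => exact ih _

lemma eachLetterMoves_append (u w : List (Fin n × Bool)) (x : unitInterval) :
    EachLetterMoves b (u ++ w) x ↔
      EachLetterMoves b u x ∧ EachLetterMoves b w (wordApply b u x) := by
  induction u generalizing x with
  | nil => simp
  | cons ℓ u ih => simp [ih, and_assoc]

@[simp] lemma letterEval_flip (i : Fin n) (β : Bool) (x : unitInterval) :
    letterEval b (i, !β) (letterEval b (i, β) x) = x := by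
  cases β <;> simp [letterEval]

lemma slr_append (u w : List (Fin n × Bool)) (x : unitInterval) :
    slr b (u ++ w) x = slr b u x ++ slr b w (wordApply b u x) := by
  induction u generalizing x with
  | nil => rfl
  | cons ℓ u ih => by_cases h : letterEval b ℓ x = x <;> simp [slr, h, ih]

lemma eachLetterMoves_slr (w : List (Fin n × Bool)) (x : unitInterval) :
    EachLetterMoves b (slr b w x) x := by
  induction w generalizing x with
  | nil => trivial
  | cons ℓ w ih => by_cases h : letterEval b ℓ x = x <;> simp [slr, h, ih]

lemma wordApply_slr (w : List (Fin n × Bool)) (x : unitInterval) :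
    wordApply b (slr b w x) x = wordApply b w x := by
  induction w generalizing x with
  | nil => rfl
  | cons ℓ w ih => by_cases h : letterEval b ℓ x = x <;> simp [slr, h, ih]

lemma invRev_singleton (ℓ : Fin n × Bool) : invRev [ℓ] = [(ℓ.1, !ℓ.2)] := rfl

lemma wordApply_invRev (u : List (Fin n × Bool)) (x : unitInterval) :
    wordApply b (invRev u) (wordApply b u x) = x := by
  induction u generalizing x with
  | nil => rfl
  | cons ℓ u ih =>
    rw [invRev_cons, invRev_singleton, wordApply_append, wordApply_cons, wordApply_cons, ih]
    exact letterEval_flip ℓ.1 ℓ.2 x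

lemma slr_invRev (u : List (Fin n × Bool)) (x : unitInterval) :
    slr b (invRev u) (wordApply b u x) = invRev (slr b u x) := by
  induction u generalizing x with
  | nil => rfl
  | cons ℓ u ih =>
    obtain ⟨i, β⟩ := ℓ
    rw [invRev_cons, wordApply_cons, slr_append, ih, wordApply_invRev, invRev_singleton]
    by_cases h : letterEval b (i, β) x = x
    · have h' : letterEval b (i, !β) x = x := by
        conv_lhs => rw [← h]
        exact letterEval_flip i β x
      simp [slr, h, h']
    · have h' : letterEval b (i, !β) (letterEval b (i, β) x) ≠ letterEval b (i, β) x := by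
        rw [letterEval_flip]; exact Ne.symm h
      simp only [slr, if_neg h, if_neg h']
      rw [invRev_cons, invRev_singleton]

lemma wordApply_eq_of_step {v v' : List (Fin n × Bool)} (h : Red.Step v v') :
    wordApply b v' = wordApply b v := by
  cases h
  funext x
  simp [wordApply_append]

lemma EachLetterMoves.of_step {v v' : List (Fin n × Bool)} {x : unitInterval}
    (hv : EachLetterMoves b v x) (h : Red.Step v v') : EachLetterMoves b v' x := by
  cases h
  simp_all [eachLetterMoves_append]

lemma wordApply_eq_of_red {v v' : List (Fin n × Bool)} (h : Red v v') :
    wordApply b v' = wordApply b v := by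
  induction h with
  | refl => rfl
  | tail _ hs ih => rw [wordApply_eq_of_step hs, ih]

lemma EachLetterMoves.of_red {v v' : List (Fin n × Bool)} {x : unitInterval}
    (hv : EachLetterMoves b v x) (h : Red v v') : EachLetterMoves b v' x := by
  induction h with
  | refl => exact hv
  | tail _ hs ih => exact ih.of_step hs

lemma exists_wordApply_eq_of_mem_closure {g : Homeo} (hg : g ∈ Subgroup.closure (Set.range b)) :
    ∃ u, ∀ y, wordApply b u y = g y := by
  induction hg using Subgroup.closure_induction with
  | mem g hg =>
    obtain ⟨i, rfl⟩ := hg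
    exact ⟨[(i, true)], fun y => rfl⟩
  | one => exact ⟨[], fun y => rfl⟩
  | mul g₁ g₂ _ _ ih₁ ih₂ =>
    obtain ⟨u₁, hu₁⟩ := ih₁
    obtain ⟨u₂, hu₂⟩ := ih₂
    exact ⟨u₂ ++ u₁, fun y => by rw [wordApply_append, hu₂, hu₁]; rfl⟩
  | inv g _ ih =>
    obtain ⟨u, hu⟩ := ih
    refine ⟨invRev u, fun y => ?_⟩
    simpa [hu] using wordApply_invRev (b := b) u (g⁻¹ y)

def letterFoot (b : Fin n → Homeo) (a d : Fin n → ℝ) (c : Fin n → unitInterval)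
    (ℓ : Fin n × Bool) : Set ℝ :=
  Foot (b ℓ.1) (a ℓ.1) (d ℓ.1) (c ℓ.1) ℓ.2

structure IsGeometricallyFast (b : Fin n → Homeo) (a d : Fin n → ℝ)
    (c : Fin n → unitInterval) : Prop where
  isPosBump : ∀ i, IsPosBump (b i) (a i) (d i)
  marker_mem_orbital : ∀ i, a i < c i ∧ (c i : ℝ) < d i
  pairwise_disjoint_letterFoot :
    Pairwise fun p q => Disjoint (letterFoot b a d c p) (letterFoot b a d c q)

def Footless (b : Fin n → Homeo) (a d : Fin n → ℝ) (c : Fin n → unitInterval)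
    (y : unitInterval) : Prop :=
  ∀ ℓ, (y : ℝ) ∉ letterFoot b a d c ℓ

namespace IsGeometricallyFast

variable {a d : Fin n → ℝ} {c : Fin n → unitInterval} (hB : IsGeometricallyFast b a d c)
include hB

lemma eq_of_mem_letterFoot {p q : Fin n × Bool} {y : ℝ} (hp : y ∈ letterFoot b a d c p)
    (hq : y ∈ letterFoot b a d c q) : p = q := by
  by_contra hpq
  exact Set.disjoint_left.1 (hB.pairwise_disjoint_letterFoot hpq) hp hq

lemma le_apply (i : Fin n) (x : unitInterval) : (x : ℝ) ≤ b i x :=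
  (hB.isPosBump i).2.2.2.1 x

lemma apply_ne_iff (i : Fin n) (x : unitInterval) : b i x ≠ x ↔ a i < x ∧ (x : ℝ) < d i :=
  (hB.isPosBump i).2.2.2.2 x

lemma apply_lt_right {i : Fin n} {x : unitInterval} (hx : (x : ℝ) < d i) :
    (b i x : ℝ) < d i := by
  obtain ⟨ha, had, hd, -, hmoved⟩ := hB.isPosBump i
  let D : unitInterval := ⟨d i, ha.trans had.le, hd⟩
  have hD : b i D = D := by
    by_contra h
    exact lt_irrefl _ ((hmoved D).1 h).2
  have := (b i).lt_iff_lt.2 (show x < D from hx)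
  rwa [hD] at this

lemma mem_orbital_of_letterEval_ne {ℓ : Fin n × Bool} {y : unitInterval}
    (h : letterEval b ℓ y ≠ y) : a ℓ.1 < y ∧ (y : ℝ) < d ℓ.1 := by
  obtain ⟨i, _ | _⟩ := ℓ
  · obtain ⟨z, rfl⟩ := (b i).surjective y
    simp only [letterEval, Bool.false_eq_true, ↓reduceIte, RelIso.inv_apply_self] at h
    have hzo := (hB.apply_ne_iff i z).1 (Ne.symm h)
    exact ⟨hzo.1.trans_le (hB.le_apply i z), hB.apply_lt_right hzo.2⟩
  · exact (hB.apply_ne_iff i y).1 h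

lemma letterEval_mem_letterFoot {ℓ : Fin n × Bool} {y : unitInterval}
    (hm : letterEval b ℓ y ≠ y) (hy : (y : ℝ) ∉ letterFoot b a d c (ℓ.1, !ℓ.2)) :
    (letterEval b ℓ y : ℝ) ∈ letterFoot b a d c ℓ := by
  have horb := hB.mem_orbital_of_letterEval_ne hm
  obtain ⟨i, _ | _⟩ := ℓ
  · obtain ⟨z, rfl⟩ := (b i).surjective y
    simp only [letterEval, Bool.false_eq_true, ↓reduceIte, RelIso.inv_apply_self] at hm ⊢
    simp only [letterFoot, Foot, Bool.not_false, Set.mem_Ico, not_and] at hy ⊢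
    refine ⟨(hB.apply_ne_iff i z).1 (Ne.symm hm) |>.1, ?_⟩
    by_contra hcz
    exact hy ((b i).monotone (not_lt.1 hcz)) horb.2
  · simp only [letterEval, ↓reduceIte] at hm ⊢
    simp only [letterFoot, Foot, Bool.not_true, Set.mem_Ioo, not_and, not_lt] at hy ⊢
    exact ⟨(b i).monotone (hy horb.1), hB.apply_lt_right horb.2⟩

lemma exists_mem_letterFoot_wordApply {ℓ : Fin n × Bool} {w : List (Fin n × Bool)}
    {y : unitInterval} (hred : IsReduced (ℓ :: w)) (hm : EachLetterMoves b (ℓ :: w) y)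
    (hy : (y : ℝ) ∉ letterFoot b a d c (ℓ.1, !ℓ.2)) :
    ∃ ℓ', (wordApply b (ℓ :: w) y : ℝ) ∈ letterFoot b a d c ℓ' := by
  induction w generalizing ℓ y with
  | nil => exact ⟨ℓ, hB.letterEval_mem_letterFoot hm.1 hy⟩
  | cons ℓ' w ih =>
    have hℓ := hB.letterEval_mem_letterFoot hm.1 hy
    refine ih (isReduced_cons_cons.1 hred).2 hm.2 fun hℓ' => ?_
    have := hB.eq_of_mem_letterFoot hℓ hℓ'
    subst this
    simpa using (isReduced_cons_cons.1 hred).1 rfl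

lemma eq_nil_of_footless {v : List (Fin n × Bool)} {r : unitInterval}
    (hr : Footless b a d c r) (hred : IsReduced v) (hm : EachLetterMoves b v r)
    (hv : wordApply b v r = r) : v = [] := by
  obtain _ | ⟨ℓ, w⟩ := v
  · rfl
  · obtain ⟨ℓ', h⟩ := hB.exists_mem_letterFoot_wordApply hred hm (hr _)
    exact absurd (hv ▸ h) (hr ℓ')

lemma mk_eq_one_of_footless {v : List (Fin n × Bool)} {r : unitInterval}
    (hr : Footless b a d c r) (hm : EachLetterMoves b v r) (hv : wordApply b v r = r) :
    FreeGroup.mk v = 1 := by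
  rw [← toWord_eq_nil_iff, toWord_mk]
  refine hB.eq_nil_of_footless hr ?_ (hm.of_red reduce.red) ?_
  · simpa [toWord_mk] using isReduced_toWord (x := FreeGroup.mk v)
  · rwa [wordApply_eq_of_red reduce.red]

lemma mk_slr_eq_one_of_footless {v : List (Fin n × Bool)} {r : unitInterval}
    (hr : Footless b a d c r) (hv : wordApply b v r = r) : FreeGroup.mk (slr b v r) = 1 :=
  hB.mk_eq_one_of_footless hr (eachLetterMoves_slr v r) ((wordApply_slr v r).trans hv)

lemma marker_lt_apply_marker (i : Fin n) : (c i : ℝ) < b i (c i) := by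
  have hne : b i (c i) ≠ c i := (hB.apply_ne_iff i (c i)).2 (hB.marker_mem_orbital i)
  exact (hB.le_apply i (c i)).lt_of_ne fun h => hne (Subtype.ext h.symm)

lemma eq_source_of_Ioo_subset {p : Fin n} {ℓ : Fin n × Bool} {u : ℝ} (hu : u < c p)
    (h : Set.Ioo u (c p) ⊆ letterFoot b a d c ℓ) : ℓ = (p, false) := by
  obtain ⟨s, hs, hsc⟩ := exists_between (max_lt hu (hB.marker_mem_orbital p).1)
  exact hB.eq_of_mem_letterFoot (h ⟨(le_max_left _ _).trans_lt hs, hsc⟩)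
    (show s ∈ letterFoot b a d c (p, false) from ⟨(le_max_right _ _).trans_lt hs, hsc⟩)

lemma marker_not_mem_source (p j : Fin n) : (c p : ℝ) ∉ letterFoot b a d c (j, false) := by
  rintro ⟨haj, hcj⟩
  obtain rfl : j = p := by
    simpa using
      hB.eq_source_of_Ioo_subset (ℓ := (j, false)) haj fun s hs => ⟨hs.1, hs.2.trans hcj⟩
  exact lt_irrefl _ hcj

lemma eq_apply_of_marker_mem_dest {p j : Fin n} (h : (c p : ℝ) ∈ letterFoot b a d c (j, true)) :
    c p = b j (c j) := by
  obtain ⟨hle, hlt⟩ := h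
  refine (Subtype.ext (hle.eq_or_lt.resolve_right fun hlt' => ?_)).symm
  simpa using
    hB.eq_source_of_Ioo_subset (ℓ := (j, true)) hlt' fun s hs => ⟨hs.1.le, hs.2.trans hlt⟩

/-- A marker of least value in an orbit lies in no foot: a marker `c j = b k (c k)` in a
destination has the smaller marker `c k` in its orbit. -/
lemma exists_footless_marker {x : unitInterval}
    (hx : ∃ i, ∃ h ∈ Subgroup.closure (Set.range b), h (c i) = x) :
    ∃ j, Footless b a d c (c j) ∧ ∃ h ∈ Subgroup.closure (Set.range b), h (c j) = x := by
  classical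
  obtain ⟨j, hj, hmin⟩ :=
    (Finset.univ.filter fun i => ∃ h ∈ Subgroup.closure (Set.range b), h (c i) = x)
      |>.exists_min_image (fun i => (c i : ℝ)) (by simpa [Finset.filter_nonempty_iff] using hx)
  simp only [Finset.mem_filter, Finset.mem_univ, true_and] at hj hmin
  refine ⟨j, ?_, hj⟩
  rintro ⟨k, _ | _⟩ hk
  · exact hB.marker_not_mem_source j k hk
  · obtain ⟨h, hh, rfl⟩ := hj
    have hjk := hB.eq_apply_of_marker_mem_dest hk
    have hle := hmin k ⟨h * b k, mul_mem hh (Subgroup.subset_closure ⟨k, rfl⟩),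
      by rw [RelIso.mul_apply, ← hjk]⟩
    have hlt := hB.marker_lt_apply_marker k
    rw [← hjk] at hlt
    exact absurd hle (not_le.2 hlt)

end IsGeometricallyFast

end GeometricallyFast

/-- For a geometrically fast set `B` of positive bumps with markers witnessing fastness:
if a word `w` over `B^±` evaluates to the identity homeomorphism, then for every point
`x` of the orbit `M⟨B⟩` of the markers, the simply local reduction `w_x` maps to the
trivial element of the free group (i.e., it freely reduces to the empty word). -/
theorem slr_of_identity_word_freely_trivial {n : ℕ}
    (b : Fin n → Homeo) (a d : Fin n → ℝ) (c : Fin n → unitInterval)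
    (hb : ∀ i, IsPosBump (b i) (a i) (d i))
    (hc : ∀ i, a i < (c i : ℝ) ∧ (c i : ℝ) < d i)
    (hdisj : ∀ p q : Fin n × Bool, p ≠ q →
      Disjoint (Foot (b p.1) (a p.1) (d p.1) (c p.1) p.2)
        (Foot (b q.1) (a q.1) (d q.1) (c q.1) q.2))
    (MB : Set unitInterval)
    (hMB : MB = {y | ∃ i, ∃ h ∈ Subgroup.closure (Set.range b), h (c i) = y})
    (w : List (Fin n × Bool))
    (hw : ∀ x : unitInterval, wordApply b w x = x) :
    ∀ x ∈ MB, FreeGroup.mk (slr b w x) = 1 := by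
  open GeometricallyFast FreeGroup in
  intro x hx
  have hB : IsGeometricallyFast b a d c := ⟨hb, hc, fun p q => hdisj p q⟩
  obtain ⟨r, hr, h, hh, rfl⟩ := hB.exists_footless_marker (hMB ▸ hx)
  obtain ⟨u, hu⟩ := exists_wordApply_eq_of_mem_closure hh
  rw [← hu]
  have hloop : wordApply b (u ++ w ++ invRev u) (c r) = c r := by
    rw [wordApply_append, wordApply_append, hw, wordApply_invRev]
  have := hB.mk_slr_eq_one_of_footless hr hloop
  rwa [slr_append, slr_append, wordApply_append, hw, slr_invRev, ← mul_mk, ← mul_mk, ← inv_mk,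
    conj_eq_one_iff] at this
end

section
/- Let B = {b_1,…,b_n} be a geometrically fast set of positive bumps on [0,1] with markers witnessing fastness, and let w be a nonempty word over B (a finite sequence of letters from B, with no inverses). Then the map x ↦ w_x from [0,1] to simply local reductions of w takes only finitely many values, and for each value the set of points x in the support of B realizing that value is a finite union of intervals. -/
open scoped Classical

/-- The simply local reduction `w_x` of a positive word `w` (a list of letters from `B`,
with no inverses) at a point `x`: scan the letters left to right, deleting a letter
exactly when the current image of `x` is fixed by it. -/
noncomputable def slrPos {n : ℕ} (b : Fin n → Homeo) :
    List (Fin n) → unitInterval → List (Fin n)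
  | [], _ => []
  | i :: rest, x =>
      if b i x = x then slrPos b rest x
      else i :: slrPos b rest (b i x)

/-- `s` is a finite union of ord-connected sets. -/
def FUO (s : Set unitInterval) : Prop :=
  ∃ (m : ℕ) (J : Fin m → Set unitInterval),
    (∀ k, (J k).OrdConnected) ∧ s = ⋃ k, J k

lemma FUO_of_ordConnected {s : Set unitInterval} (hs : s.OrdConnected) : FUO s :=
  ⟨1, fun _ => s, fun _ => hs, (Set.iUnion_const s).symm⟩

lemma FUO_empty : FUO (∅ : Set unitInterval) :=
  ⟨0, fun k => ∅, fun k => k.elim0, by simp⟩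

lemma FUO.union {s t : Set unitInterval} (hs : FUO s) (ht : FUO t) : FUO (s ∪ t) := by
  obtain ⟨m, J, hJ, rfl⟩ := hs
  obtain ⟨m', J', hJ', rfl⟩ := ht
  refine ⟨m + m', fun k => Sum.elim J J' (finSumFinEquiv.symm k), fun k => ?_, ?_⟩
  · show (Sum.elim J J' (finSumFinEquiv.symm k)).OrdConnected
    rcases h : finSumFinEquiv.symm k with i | i
    · exact hJ i
    · exact hJ' i
  · ext x
    simp only [Set.mem_iUnion, Set.mem_union]
    constructor
    · rintro (⟨i, hi⟩ | ⟨i, hi⟩)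
      · exact ⟨finSumFinEquiv (Sum.inl i), by simpa using hi⟩
      · exact ⟨finSumFinEquiv (Sum.inr i), by simpa using hi⟩
    · rintro ⟨k, hk⟩
      rcases h : finSumFinEquiv.symm k with i | i <;> rw [h] at hk
      · exact Or.inl ⟨i, hk⟩
      · exact Or.inr ⟨i, hk⟩

lemma FUO.inter {s t : Set unitInterval} (hs : FUO s) (ht : FUO t) : FUO (s ∩ t) := by
  obtain ⟨m, J, hJ, rfl⟩ := hs
  obtain ⟨m', J', hJ', rfl⟩ := ht
  refine ⟨m * m', fun k => J (finProdFinEquiv.symm k).1 ∩ J' (finProdFinEquiv.symm k).2,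
    fun k => (hJ _).inter (hJ' _), ?_⟩
  ext x
  simp only [Set.mem_inter_iff, Set.mem_iUnion]
  constructor
  · rintro ⟨⟨i, hi⟩, ⟨j, hj⟩⟩
    exact ⟨finProdFinEquiv (i, j), by simpa using ⟨hi, hj⟩⟩
  · rintro ⟨k, hk1, hk2⟩
    exact ⟨⟨_, hk1⟩, ⟨_, hk2⟩⟩

lemma ordConnected_preimage_mono {α β : Type*} [Preorder α] [Preorder β] {f : α → β}
    (hf : Monotone f) {s : Set β} (hs : s.OrdConnected) : (f ⁻¹' s).OrdConnected :=
  ⟨fun x hx y hy z hz => hs.out hx hy ⟨hf hz.1, hf hz.2⟩⟩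

lemma FUO.preimage (f : Homeo) {s : Set unitInterval} (hs : FUO s) :
    FUO ((f : unitInterval → unitInterval) ⁻¹' s) := by
  obtain ⟨m, J, hJ, rfl⟩ := hs
  exact ⟨m, fun k => f ⁻¹' J k,
    fun k => ordConnected_preimage_mono f.monotone (hJ k), by rw [Set.preimage_iUnion]⟩

lemma slrPos_sublist {n : ℕ} (b : Fin n → Homeo) :
    ∀ (w : List (Fin n)) (x : unitInterval), (slrPos b w x).Sublist w
  | [], x => by simp [slrPos]
  | i :: rest, x => by
    simp only [slrPos]
    split
    · exact (slrPos_sublist b rest x).cons i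
    · exact (slrPos_sublist b rest _).cons₂ i

lemma ordConnected_coe_le (r : ℝ) : {x : unitInterval | (x : ℝ) ≤ r}.OrdConnected :=
  ⟨fun _ _ y hy z hz => le_trans (Subtype.coe_le_coe.2 hz.2) hy⟩

lemma ordConnected_le_coe (r : ℝ) : {x : unitInterval | r ≤ (x : ℝ)}.OrdConnected :=
  ⟨fun x hx _ _ z hz => le_trans hx (Subtype.coe_le_coe.2 hz.1)⟩

lemma ordConnected_between (r s : ℝ) :
    {x : unitInterval | r < (x : ℝ) ∧ (x : ℝ) < s}.OrdConnected :=
  ⟨fun x hx y hy z hz => ⟨lt_of_lt_of_le hx.1 (Subtype.coe_le_coe.2 hz.1),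
    lt_of_le_of_lt (Subtype.coe_le_coe.2 hz.2) hy.2⟩⟩

lemma FUO_slr {n : ℕ} (b : Fin n → Homeo) (a d : Fin n → ℝ)
    (hb : ∀ i, ∀ x : unitInterval, b i x ≠ x ↔ a i < (x : ℝ) ∧ (x : ℝ) < d i) :
    ∀ (w u : List (Fin n)), FUO {x | slrPos b w x = u}
  | [], u => by
    by_cases h : u = []
    · subst h
      have : {x : unitInterval | slrPos b [] x = []} = Set.univ := by
        ext x; simp [slrPos]
      rw [this]; exact FUO_of_ordConnected Set.ordConnected_univ
    · have : {x : unitInterval | slrPos b [] x = u} = ∅ := by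
        ext x; simp [slrPos, Ne.symm h]
      rw [this]; exact FUO_empty
  | i :: rest, u => by
    have hfixiff : ∀ x : unitInterval, b i x = x ↔ ¬(a i < (x : ℝ) ∧ (x : ℝ) < d i) := by
      intro x
      constructor
      · intro h h2; exact ((hb i x).2 h2) h
      · intro h; by_contra h2; exact h ((hb i x).1 h2)
    have key : {x : unitInterval | slrPos b (i :: rest) x = u} =
        ({x : unitInterval | ¬(a i < (x : ℝ) ∧ (x : ℝ) < d i)} ∩ {x | slrPos b rest x = u}) ∪
        ({x : unitInterval | a i < (x : ℝ) ∧ (x : ℝ) < d i} ∩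
          {x | i :: slrPos b rest (b i x) = u}) := by
      ext x
      simp only [Set.mem_setOf_eq, Set.mem_union, Set.mem_inter_iff, slrPos]
      by_cases hfix : b i x = x
      · simp [hfix, (hfixiff x).1 hfix]
      · simp [hfix, ((hb i x).1 hfix).1, ((hb i x).1 hfix).2]
    rw [key]
    have hfixFUO : FUO {x : unitInterval | ¬(a i < (x : ℝ) ∧ (x : ℝ) < d i)} := by
      have : {x : unitInterval | ¬(a i < (x : ℝ) ∧ (x : ℝ) < d i)} =
          {x : unitInterval | (x : ℝ) ≤ a i} ∪ {x : unitInterval | d i ≤ (x : ℝ)} := by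
        ext x
        simp only [Set.mem_setOf_eq, Set.mem_union, not_and_or, not_lt]
      rw [this]
      exact (FUO_of_ordConnected (ordConnected_coe_le (a i))).union
        (FUO_of_ordConnected (ordConnected_le_coe (d i)))
    have hooFUO : FUO {x : unitInterval | a i < (x : ℝ) ∧ (x : ℝ) < d i} :=
      FUO_of_ordConnected (ordConnected_between _ _)
    have hB : FUO {x : unitInterval | i :: slrPos b rest (b i x) = u} := by
      match u with
      | [] =>
        have : {x : unitInterval | i :: slrPos b rest (b i x) = ([] : List (Fin n))} = ∅ := by
          ext x; simp
        rw [this]; exact FUO_empty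
      | j :: u' =>
        by_cases hj : j = i
        · subst hj
          have : {x : unitInterval | j :: slrPos b rest (b j x) = j :: u'} =
              (b j : unitInterval → unitInterval) ⁻¹' {y | slrPos b rest y = u'} := by
            ext x; simp [Set.mem_preimage]
          rw [this]
          exact FUO.preimage (b j) (FUO_slr b a d hb rest u')
        · have : {x : unitInterval | i :: slrPos b rest (b i x) = j :: u'} = ∅ := by
            ext x; simp [Ne.symm hj]
          rw [this]; exact FUO_empty
    exact (hfixFUO.inter (FUO_slr b a d hb rest u)).union (hooFUO.inter hB)

/-- For a geometrically fast set `B` of positive bumps and a nonempty positive word `w`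
over `B`, the map `x ↦ w_x` takes only finitely many values, and for each value the set
of points of the support of `B` realizing it is a finite union of intervals. -/
theorem slr_finitely_many_values_on_intervals {n : ℕ}
    (b : Fin n → Homeo) (a d : Fin n → ℝ) (c : Fin n → unitInterval)
    (hb : ∀ i, IsPosBump (b i) (a i) (d i))
    (hc : ∀ i, a i < (c i : ℝ) ∧ (c i : ℝ) < d i)
    (hdisj : ∀ p q : Fin n × Bool, p ≠ q →
      Disjoint (Foot (b p.1) (a p.1) (d p.1) (c p.1) p.2)
        (Foot (b q.1) (a q.1) (d q.1) (c q.1) q.2))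
    (w : List (Fin n)) (hw : w ≠ []) :
    (Set.range fun x : unitInterval => slrPos b w x).Finite ∧
      ∀ u : List (Fin n), ∃ (m : ℕ) (J : Fin m → Set unitInterval),
        (∀ k, (J k).OrdConnected) ∧
          {x : unitInterval | (x : ℝ) ∈ (⋃ i, Set.Ioo (a i) (d i)) ∧ slrPos b w x = u} =
            ⋃ k, J k := by
  constructor
  · apply Set.Finite.subset w.sublists.finite_toSet
    rintro l ⟨x, rfl⟩
    exact List.mem_sublists.2 (slrPos_sublist b w x)
  · intro u
    have hsupp : FUO {x : unitInterval | (x : ℝ) ∈ ⋃ i, Set.Ioo (a i) (d i)} := by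
      refine ⟨n, fun i => {x : unitInterval | a i < (x : ℝ) ∧ (x : ℝ) < d i},
        fun i => ordConnected_between _ _, ?_⟩
      ext x; simp [Set.mem_iUnion]
    have hslr : FUO {x : unitInterval | slrPos b w x = u} :=
      FUO_slr b a d (fun i => (hb i).2.2.2.2) w u
    have := hsupp.inter hslr
    obtain ⟨m, J, hJ, hEq⟩ := this
    exact ⟨m, J, hJ, hEq⟩
end

section
/- Let f ∈ F_4, let J = [i/4^n, (i+1)/4^n] be a standard 4-adic interval on which f is affine, and suppose the image f(J) = [j/4^m, (j+1)/4^m] is also a standard 4-adic interval. Then J and f(J) have the same type, i.e. i ≡ j (mod 3). -/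
/-- A 4-adic rational, i.e. an element of `ℤ[1/4]`. -/
def FourAdic (x : ℝ) : Prop := ∃ (a : ℤ) (k : ℕ), x = (a : ℝ) / 4 ^ k

/-- Membership in the group `F₄`: `f` is piecewise linear with finitely many breakpoints,
all breakpoints are 4-adic rationals, and all slopes are integer powers of `4`. -/
def IsF4 (f : Homeo) : Prop :=
  ∃ s : Finset ℝ, (∀ q ∈ s, FourAdic q) ∧
    ∀ x : unitInterval, (x : ℝ) ∉ s →
      ∃ (m : ℤ) (cst ε : ℝ), 0 < ε ∧
        ∀ y : unitInterval, |(y : ℝ) - (x : ℝ)| < ε →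
          ((f y : unitInterval) : ℝ) = 4 ^ m * (y : ℝ) + cst

/-!
Write `V = 3 ℤ[1/4]`. Since `4 ≡ 1 (mod 3)`, `4 ^ m - 1 ∈ V` for every `m : ℤ`. Between two
consecutive breakpoints `b < x` of `f ∈ F₄` the mean value theorem gives
`f x - f b = 4 ^ m (x - b)`, so `f x - x ≡ f b - b (mod V)` whenever `x` and `b` are 4-adic.
Starting from `f 0 = 0` and climbing through the (4-adic) breakpoints, `f x - x ∈ V` for every
4-adic `x`. At `x = i / 4ⁿ` this says `j / 4ᵐ - i / 4ⁿ ∈ V`, i.e. `i ≡ j (mod 3)`.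
-/

/-- `x ∈ 3 ℤ[1/4]`. -/
def ThreeFourAdic (x : ℝ) : Prop := ∃ (a : ℤ) (k : ℕ), x = 3 * a / 4 ^ k

lemma FourAdic.sub {x y : ℝ} (hx : FourAdic x) (hy : FourAdic y) : FourAdic (x - y) := by
  obtain ⟨a, k, rfl⟩ := hx
  obtain ⟨b, l, rfl⟩ := hy
  exact ⟨a * 4 ^ l - b * 4 ^ k, k + l, by field_simp; push_cast; ring⟩

lemma ThreeFourAdic.zero : ThreeFourAdic 0 := ⟨0, 0, by simp⟩

lemma ThreeFourAdic.add {x y : ℝ} (hx : ThreeFourAdic x) (hy : ThreeFourAdic y) :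
    ThreeFourAdic (x + y) := by
  obtain ⟨a, k, rfl⟩ := hx
  obtain ⟨b, l, rfl⟩ := hy
  exact ⟨a * 4 ^ l + b * 4 ^ k, k + l, by field_simp; push_cast; ring⟩

lemma ThreeFourAdic.mul_fourAdic {x y : ℝ} (hx : ThreeFourAdic x) (hy : FourAdic y) :
    ThreeFourAdic (x * y) := by
  obtain ⟨a, k, rfl⟩ := hx
  obtain ⟨b, l, rfl⟩ := hy
  exact ⟨a * b, k + l, by field_simp; push_cast; ring⟩

lemma threeFourAdic_zpow_sub_one (m : ℤ) : ThreeFourAdic ((4 : ℝ) ^ m - 1) := by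
  obtain ⟨k, hk⟩ := Int.eq_nat_or_neg m
  obtain ⟨d, hd⟩ : (4 - 1 : ℤ) ∣ 4 ^ k - 1 ^ k := sub_dvd_pow_sub_pow 4 1 k
  have hd' : (4 : ℝ) ^ k = 3 * d + 1 := by
    norm_num at hd; exact_mod_cast (by linarith : (4 : ℤ) ^ k = 3 * d + 1)
  rcases hk with rfl | rfl
  · exact ⟨d, 0, by simp [hd']⟩
  · refine ⟨-d, k, ?_⟩
    rw [zpow_neg, zpow_natCast, Int.cast_neg]
    field_simp
    linear_combination -hd'

lemma mod_three_eq_of_threeFourAdic_sub {i j n m : ℕ}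
    (h : ThreeFourAdic ((j : ℝ) / 4 ^ m - i / 4 ^ n)) : i % 3 = j % 3 := by
  obtain ⟨a, k, hak⟩ := h
  have hreal : ((j : ℝ) * 4 ^ n - i * 4 ^ m) * 4 ^ k = 3 * a * 4 ^ m * 4 ^ n := by
    field_simp at hak; linear_combination hak
  have hint : ((j : ℤ) * 4 ^ n - i * 4 ^ m) * 4 ^ k = 3 * a * 4 ^ m * 4 ^ n := by
    exact_mod_cast hreal
  have hmod := congrArg (Int.cast : ℤ → ZMod 3) hint
  push_cast at hmod
  rw [show (4 : ZMod 3) = 1 by decide, show (3 : ZMod 3) = 0 by decide] at hmod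
  simp only [one_pow, mul_one, zero_mul, sub_eq_zero] at hmod
  exact ((ZMod.natCast_eq_natCast_iff' i j 3).mp hmod.symm)

def PowFourAffineOff (f : Homeo) (s : Finset ℝ) : Prop :=
  ∀ x : unitInterval, (x : ℝ) ∉ s →
    ∃ (m : ℤ) (cst ε : ℝ), 0 < ε ∧
      ∀ y : unitInterval, |(y : ℝ) - (x : ℝ)| < ε →
        ((f y : unitInterval) : ℝ) = 4 ^ m * (y : ℝ) + cst

noncomputable def homeoExtend (f : Homeo) : ℝ → ℝ := Set.IccExtend zero_le_one fun x => (f x : ℝ)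

lemma continuous_homeoExtend (f : Homeo) : Continuous (homeoExtend f) :=
  (continuous_subtype_val.comp f.continuous).Icc_extend'

lemma homeoExtend_zero (f : Homeo) : homeoExtend f 0 = 0 := by
  rw [homeoExtend, Set.IccExtend_left]
  exact congrArg Subtype.val (map_bot f)

section PowFourAffineOff

variable {f : Homeo} {s : Finset ℝ}

open Set

lemma PowFourAffineOff.hasDerivAt (hf : PowFourAffineOff f s) {y : ℝ} (hy : y ∈ Ioo 0 1)
    (hys : y ∉ s) : ∃ m : ℤ, HasDerivAt (homeoExtend f) (4 ^ m) y := by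
  obtain ⟨m, c, ε, hε, hloc⟩ := hf ⟨y, Ioo_subset_Icc_self hy⟩ hys
  refine ⟨m, ?_⟩
  have hlin : HasDerivAt (fun z => 4 ^ m * z + c) (4 ^ m) y := by
    simpa using ((hasDerivAt_id y).const_mul ((4 : ℝ) ^ m)).add_const c
  refine hlin.congr_of_eventuallyEq ?_
  filter_upwards [Ioo_mem_nhds hy.1 hy.2, Metric.ball_mem_nhds y hε] with z hz hzy
  rw [homeoExtend, IccExtend_of_mem _ _ (Ioo_subset_Icc_self hz)]
  exact hloc ⟨z, _⟩ hzy

lemma PowFourAffineOff.exists_sub_eq_zpow_mul (hf : PowFourAffineOff f s) {b x : ℝ}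
    (hb : 0 ≤ b) (hbx : b < x) (hx : x ≤ 1) (hgap : ∀ q ∈ s, q ∉ Ioo b x) :
    ∃ m : ℤ, homeoExtend f x - homeoExtend f b = 4 ^ m * (x - b) := by
  have hmem : ∀ y ∈ Ioo b x, y ∈ Ioo (0 : ℝ) 1 := fun y hy => ⟨hb.trans_lt hy.1, hy.2.trans_le hx⟩
  obtain ⟨ξ, hξ, hslope⟩ := exists_deriv_eq_slope (homeoExtend f) hbx
    (continuous_homeoExtend f).continuousOn fun y hy => by
      obtain ⟨_, hderiv⟩ := hf.hasDerivAt (hmem y hy) fun hys => hgap y hys hy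
      exact hderiv.differentiableAt.differentiableWithinAt
  obtain ⟨m, hm⟩ := hf.hasDerivAt (hmem ξ hξ) fun hξs => hgap ξ hξs hξ
  refine ⟨m, ?_⟩
  rw [hm.deriv, eq_div_iff (sub_ne_zero.mpr hbx.ne')] at hslope
  exact hslope.symm

lemma PowFourAffineOff.threeFourAdic_sub (hf : PowFourAffineOff f s)
    (hs : ∀ q ∈ s, FourAdic q) {x : ℝ} (hx : x ∈ Icc 0 1) (hx4 : FourAdic x) :
    ThreeFourAdic (homeoExtend f x - x) := by
  -- `0` joins the breakpoints so that every `x > 0` has a previous one, `b`.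
  induction hN : ((insert 0 s).filter (· < x)).card using Nat.strong_induction_on
    generalizing x with
  | _ N ih =>
  rcases hx.1.eq_or_lt with rfl | hx0
  · simpa [homeoExtend_zero] using ThreeFourAdic.zero
  set B := (insert 0 s).filter (· < x)
  have hB : B.Nonempty := ⟨0, by simp [B, hx0]⟩
  set b := B.max' hB
  obtain ⟨hb_mem, hbx⟩ := Finset.mem_filter.mp (B.max'_mem hB)
  have hb0 : 0 ≤ b := B.le_max' 0 (by simp [B, hx0])
  have hb4 : FourAdic b := by
    rcases Finset.mem_insert.mp hb_mem with hb | hb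
    · exact ⟨0, 0, by simp [b, hb]⟩
    · exact hs b hb
  have hgap : ∀ q ∈ s, q ∉ Ioo b x := fun q hq hqI =>
    (B.le_max' q (by simp [B, hq, hqI.2])).not_gt hqI.1
  have hcard : ((insert 0 s).filter (· < b)).card < N := by
    rw [← hN]
    refine Finset.card_lt_card ((Finset.ssubset_iff_of_subset ?_).mpr ⟨b, B.max'_mem hB, by simp⟩)
    intro q
    simp only [B, Finset.mem_filter]
    exact fun ⟨hq, hqb⟩ => ⟨hq, hqb.trans hbx⟩
  have ihb := ih _ hcard ⟨hb0, hbx.le.trans hx.2⟩ hb4 rfl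
  obtain ⟨m, hm⟩ := hf.exists_sub_eq_zpow_mul hb0 hbx hx.2 hgap
  have hsplit : homeoExtend f x - x = (homeoExtend f b - b) + (4 ^ m - 1) * (x - b) := by
    linear_combination hm
  rw [hsplit]
  exact ihb.add ((threeFourAdic_zpow_sub_one m).mul_fourAdic (hx4.sub hb4))

end PowFourAffineOff

theorem F4_preserves_type_general
    (f : Homeo) (hf : IsF4 f)
    (i j n m : ℕ) (hi : i < 4 ^ n)
    (s cst : ℝ)
    (haff : ∀ x : unitInterval,
      (x : ℝ) ∈ Set.Icc ((i : ℝ) / 4 ^ n) (((i : ℝ) + 1) / 4 ^ n) →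
        ((f x : unitInterval) : ℝ) = s * (x : ℝ) + cst)
    (hleft : s * ((i : ℝ) / 4 ^ n) + cst = (j : ℝ) / 4 ^ m) :
    i % 3 = j % 3 := by
  obtain ⟨t, ht4, ht⟩ := hf
  have hx : (i : ℝ) / 4 ^ n ∈ Set.Icc 0 1 := by
    refine ⟨by positivity, (div_le_one (by positivity)).mpr ?_⟩
    exact_mod_cast hi.le
  have himage : homeoExtend f ((i : ℝ) / 4 ^ n) = j / 4 ^ m := by
    rw [homeoExtend, Set.IccExtend_of_mem _ _ hx, ← hleft]
    exact haff ⟨_, hx⟩ ⟨le_rfl, div_le_div_of_nonneg_right (by linarith) (by positivity)⟩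
  apply mod_three_eq_of_threeFourAdic_sub
  rw [← himage]
  exact PowFourAffineOff.threeFourAdic_sub ht ht4 hx ⟨i, n, by simp⟩

/-- If `f ∈ F₄` is affine on a standard 4-adic interval `J = [i/4ⁿ, (i+1)/4ⁿ]` and maps it
onto the standard 4-adic interval `[j/4ᵐ, (j+1)/4ᵐ]`, then `J` and `f(J)` have the same
type: `i ≡ j (mod 3)`. -/
theorem F4_preserves_type
    (f : Homeo) (hf : IsF4 f)
    (i j n m : ℕ) (hi : i < 4 ^ n) (hj : j < 4 ^ m)
    (s cst : ℝ)
    (haff : ∀ x : unitInterval,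
      (x : ℝ) ∈ Set.Icc ((i : ℝ) / 4 ^ n) (((i : ℝ) + 1) / 4 ^ n) →
        ((f x : unitInterval) : ℝ) = s * (x : ℝ) + cst)
    (hleft : s * ((i : ℝ) / 4 ^ n) + cst = (j : ℝ) / 4 ^ m)
    (hright : s * (((i : ℝ) + 1) / 4 ^ n) + cst = ((j : ℝ) + 1) / 4 ^ m) :
    i % 3 = j % 3 :=
  F4_preserves_type_general f hf i j n m hi s cst haff hleft
end

section
/- Suppose J_1, J_2, …, J_m are standard 4-adic intervals, with J_k = [i_k/4^{n_k}, (i_k+1)/4^{n_k}], which tile [0,1] in order: the left endpoint of J_1 is 0, the right endpoint of J_m is 1, and for each 1 ≤ k < m the right endpoint of J_k equals the left endpoint of J_{k+1}. Then the type of J_k is (k−1) mod 3 for every k (i.e. i_k ≡ k−1 (mod 3)), and in particular m ≡ 1 (mod 3). -/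
lemma pow4_mod3 (a : ℕ) : 4 ^ a % 3 = 1 := by
  rw [Nat.pow_mod]; simp

/-- If standard 4-adic intervals `J₁, …, Jₘ`, with `Jₖ = [iₖ/4^{nₖ}, (iₖ+1)/4^{nₖ}]`,
tile `[0,1]` in order (the left endpoint of `J₁` is `0`, the right endpoint of `Jₘ` is `1`,
and consecutive intervals share an endpoint), then the type of `Jₖ` is `(k-1) mod 3`
(here with `0`-based indexing: `i k ≡ k (mod 3)` for `0 ≤ k < m`), and `m ≡ 1 (mod 3)`. -/
theorem fourAdic_tiling_types
    (m : ℕ) (hm : 1 ≤ m) (i n : ℕ → ℕ)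
    (hi : ∀ k < m, i k < 4 ^ n k)
    (h0 : (i 0 : ℝ) / 4 ^ n 0 = 0)
    (hlast : ((i (m - 1) : ℝ) + 1) / 4 ^ n (m - 1) = 1)
    (hchain : ∀ k, k + 1 < m →
      ((i k : ℝ) + 1) / 4 ^ n k = (i (k + 1) : ℝ) / 4 ^ n (k + 1)) :
    (∀ k < m, i k % 3 = k % 3) ∧ m % 3 = 1 := by
  have hpow : ∀ a : ℕ, ((4:ℝ) ^ a) ≠ 0 := fun a => by positivity
  have hi0 : i 0 = 0 := by
    have := (div_eq_zero_iff.mp h0).resolve_right (hpow (n 0))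
    exact_mod_cast this
  have main : ∀ k < m, i k % 3 = k % 3 := by
    intro k
    induction k with
    | zero => intro _; simp [hi0]
    | succ k ih =>
      intro hk
      have hk' : k < m := Nat.lt_of_succ_lt hk
      have ihk := ih hk'
      have hc := hchain k hk
      rw [div_eq_div_iff (by positivity) (by positivity)] at hc
      have hnat : (i k + 1) * 4 ^ n (k + 1) = i (k + 1) * 4 ^ n k := by
        have : (((i k + 1) * 4 ^ n (k + 1) : ℕ) : ℝ)
            = ((i (k + 1) * 4 ^ n k : ℕ) : ℝ) := by push_cast; linarith
        exact_mod_cast this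
      have hmod := congrArg (· % 3) hnat
      simp only [Nat.mul_mod, pow4_mod3, mul_one, Nat.mod_mod_of_dvd] at hmod
      omega
  refine ⟨main, ?_⟩
  have h1 : i (m - 1) % 3 = (m - 1) % 3 := main (m - 1) (by omega)
  rw [div_eq_one_iff_eq (hpow (n (m - 1)))] at hlast
  have hnat : i (m - 1) + 1 = 4 ^ n (m - 1) := by exact_mod_cast hlast
  have := pow4_mod3 (n (m - 1))
  omega
end

section
/- The semigroup presented by ⟨A, B, C, D, Ā, B̄, C̄, D̄ | A = ABCD, B = BCDD̄C̄, C = CDD̄, D = DD̄C̄B̄, Ā = D̄C̄B̄Ā, B̄ = CDD̄C̄B̄, C̄ = DD̄C̄, D̄ = BCDD̄⟩ is isomorphic to the semigroup presented by ⟨A, B, C, D, E | A = ABCD, B = BCDB, C = CDBC, D = DBCD, E = DBCE⟩. -/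
/-- The 8-letter alphabet `A, B, C, D, Ā, B̄, C̄, D̄` of the first presentation. -/
inductive Alpha1 : Type
  | A | B | C | D | Abar | Bbar | Cbar | Dbar
  deriving DecidableEq

/-- The 5-letter alphabet `A, B, C, D, E` of the second presentation. -/
inductive Alpha2 : Type
  | A | B | C | D | E
  deriving DecidableEq

namespace Alpha1
open FreeSemigroup

private def w : Alpha1 → FreeSemigroup Alpha1 := FreeSemigroup.of

/-- The relations `A = ABCD`, `B = BCDD̄C̄`, `C = CDD̄`, `D = DD̄C̄B̄`, `Ā = D̄C̄B̄Ā`,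
`B̄ = CDD̄C̄B̄`, `C̄ = DD̄C̄`, `D̄ = BCDD̄`. -/
def rels : FreeSemigroup Alpha1 → FreeSemigroup Alpha1 → Prop := fun u v =>
  (u = w A ∧ v = w A * w B * w C * w D) ∨
  (u = w B ∧ v = w B * w C * w D * w Dbar * w Cbar) ∨
  (u = w C ∧ v = w C * w D * w Dbar) ∨
  (u = w D ∧ v = w D * w Dbar * w Cbar * w Bbar) ∨
  (u = w Abar ∧ v = w Dbar * w Cbar * w Bbar * w Abar) ∨
  (u = w Bbar ∧ v = w C * w D * w Dbar * w Cbar * w Bbar) ∨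
  (u = w Cbar ∧ v = w D * w Dbar * w Cbar) ∨
  (u = w Dbar ∧ v = w B * w C * w D * w Dbar)

end Alpha1

namespace Alpha2
open FreeSemigroup

private def w : Alpha2 → FreeSemigroup Alpha2 := FreeSemigroup.of

/-- The relations `A = ABCD`, `B = BCDB`, `C = CDBC`, `D = DBCD`, `E = DBCE`. -/
def rels : FreeSemigroup Alpha2 → FreeSemigroup Alpha2 → Prop := fun u v =>
  (u = w A ∧ v = w A * w B * w C * w D) ∨
  (u = w B ∧ v = w B * w C * w D * w B) ∨
  (u = w C ∧ v = w C * w D * w B * w C) ∨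
  (u = w D ∧ v = w D * w B * w C * w D) ∨
  (u = w E ∧ v = w D * w B * w C * w E)

end Alpha2

/-!
Both presentations are Tietze transforms of each other. In the first one the relations force
`D̄ = BC`, `B̄ = CD`, `C̄ = DB` and `Ā = BC·DĀ`, so `B̄, C̄, D̄` are redundant and `Ā` can be traded
for `E = DĀ`; in the second one `E = D·BCE`, so `Ā = BCE` recovers it. Under these substitutions
the relations of each presentation follow from those of the other, and the two substitutions are
mutually inverse on generators.
-/

namespace PresentedSemigroup

variable {α β S : Type*} [Semigroup S]

def of (r : FreeSemigroup α → FreeSemigroup α → Prop) (x : α) : (conGen r).Quotient :=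
  (FreeSemigroup.of x : FreeSemigroup α)

theorem mk_eq_mk_of_rel {r : FreeSemigroup α → FreeSemigroup α → Prop} {u v : FreeSemigroup α}
    (h : r u v) : (u : (conGen r).Quotient) = v :=
  (Con.eq _).2 (.of u v h)

variable {r : FreeSemigroup α → FreeSemigroup α → Prop}

def lift (f : α → S)
    (hf : ∀ u v, r u v → FreeSemigroup.lift f u = FreeSemigroup.lift f v) :
    (conGen r).Quotient →ₙ* S where
  toFun q := q.liftOn (FreeSemigroup.lift f) fun _ _ huv =>
    Con.conGen_le (c := Con.ker (FreeSemigroup.lift f)) |>.2 hf huv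
  map_mul' p q := Con.induction_on₂ p q (map_mul (FreeSemigroup.lift f))

@[simp]
theorem lift_of (f : α → S) (hf) (x : α) : lift (r := r) f hf (of r x) = f x := rfl

theorem hom_ext {φ ψ : (conGen r).Quotient →ₙ* S} (h : ∀ x, φ (of r x) = ψ (of r x)) :
    φ = ψ := by
  ext q
  induction q using Con.induction_on with | _ u => ?_
  induction u with
  | ih1 x => exact h x
  | ih2 u v hu hv => rw [Con.coe_mul, map_mul, map_mul, hu, hv]

def mulEquivOfGenerators {s : FreeSemigroup β → FreeSemigroup β → Prop}
    (f : α → (conGen s).Quotient) (g : β → (conGen r).Quotient) (hf) (hg)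
    (hgf : ∀ x, lift g hg (f x) = of r x) (hfg : ∀ y, lift f hf (g y) = of s y) :
    (conGen r).Quotient ≃* (conGen s).Quotient where
  toFun := lift f hf
  invFun := lift g hg
  left_inv := DFunLike.congr_fun (hom_ext (φ := (lift g hg).comp (lift f hf)) (ψ := .id _) hgf)
  right_inv := DFunLike.congr_fun (hom_ext (φ := (lift f hf).comp (lift g hg)) (ψ := .id _) hfg)
  map_mul' := map_mul _

end PresentedSemigroup

open PresentedSemigroup

namespace Alpha1

variable {S : Type*} [Semigroup S]

/-- `a`, `b`, `c`, `d` stand for `Ā`, `B̄`, `C̄`, `D̄`. -/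
structure IsModel (A B C D a b c d : S) : Prop where
  rel_A : A = A * B * C * D
  rel_B : B = B * C * D * d * c
  rel_C : C = C * D * d
  rel_D : D = D * d * c * b
  rel_Abar : a = d * c * b * a
  rel_Bbar : b = C * D * d * c * b
  rel_Cbar : c = D * d * c
  rel_Dbar : d = B * C * D * d

theorem IsModel.lift_eq_of_rels {f : Alpha1 → S}
    (h : IsModel (f A) (f B) (f C) (f D) (f Abar) (f Bbar) (f Cbar) (f Dbar))
    {u v : FreeSemigroup Alpha1} (huv : rels u v) :
    FreeSemigroup.lift f u = FreeSemigroup.lift f v := by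
  obtain ⟨_, _, _, _, _, _, _, _⟩ := h
  rcases huv with ⟨rfl, rfl⟩ | ⟨rfl, rfl⟩ | ⟨rfl, rfl⟩ | ⟨rfl, rfl⟩ | ⟨rfl, rfl⟩ | ⟨rfl, rfl⟩ |
    ⟨rfl, rfl⟩ | ⟨rfl, rfl⟩ <;>
    simp only [w, map_mul, FreeSemigroup.lift_of] <;> assumption

theorem isModel_of :
    IsModel (of rels A) (of rels B) (of rels C) (of rels D)
      (of rels Abar) (of rels Bbar) (of rels Cbar) (of rels Dbar) := by
  constructor <;> exact mk_eq_mk_of_rel (by simp [rels, w])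

section IsModel

variable {A B C D a b c d : S} (h : IsModel A B C D a b c d)
include h

theorem IsModel.dbar_eq : d = B * C :=
  calc d = B * C * D * d := h.rel_Dbar
    _ = B * (C * D * d) := by simp only [mul_assoc]
    _ = B * C := by rw [← h.rel_C]

theorem IsModel.bbar_eq : b = C * D :=
  calc b = C * D * d * c * b := h.rel_Bbar
    _ = C * (D * d * c * b) := by simp only [mul_assoc]
    _ = C * D := by rw [← h.rel_D]

theorem IsModel.eq_dbar_mul_cbar : B = d * c :=
  calc B = B * C * D * d * c := h.rel_B
    _ = d * c := by rw [← h.rel_Dbar]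

theorem IsModel.cbar_eq : c = D * B :=
  calc c = D * d * c := h.rel_Cbar
    _ = D * (d * c) := mul_assoc _ _ _
    _ = D * B := by rw [← h.eq_dbar_mul_cbar]

theorem IsModel.eq_cbar_mul_bbar : D = c * b :=
  calc D = D * d * c * b := h.rel_D
    _ = c * b := by rw [← h.rel_Cbar]

theorem IsModel.abar_eq : a = B * C * (D * a) :=
  calc a = d * c * b * a := h.rel_Abar
    _ = B * (C * D) * a := by rw [← h.eq_dbar_mul_cbar, h.bbar_eq]
    _ = B * C * (D * a) := by simp only [mul_assoc]

end IsModel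

end Alpha1

namespace Alpha2

variable {S : Type*} [Semigroup S]

structure IsModel (A B C D E : S) : Prop where
  rel_A : A = A * B * C * D
  rel_B : B = B * C * D * B
  rel_C : C = C * D * B * C
  rel_D : D = D * B * C * D
  rel_E : E = D * B * C * E

theorem IsModel.lift_eq_of_rels {f : Alpha2 → S} (h : IsModel (f A) (f B) (f C) (f D) (f E))
    {u v : FreeSemigroup Alpha2} (huv : rels u v) :
    FreeSemigroup.lift f u = FreeSemigroup.lift f v := by
  obtain ⟨_, _, _, _, _⟩ := h
  rcases huv with ⟨rfl, rfl⟩ | ⟨rfl, rfl⟩ | ⟨rfl, rfl⟩ | ⟨rfl, rfl⟩ | ⟨rfl, rfl⟩ <;>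
    simp only [w, map_mul, FreeSemigroup.lift_of] <;> assumption

theorem isModel_of : IsModel (of rels A) (of rels B) (of rels C) (of rels D) (of rels E) := by
  constructor <;> exact mk_eq_mk_of_rel (by simp [rels, w])

theorem IsModel.toAlpha1 {A B C D E : S} (h : IsModel A B C D E) :
    Alpha1.IsModel A B C D (B * C * E) (C * D) (D * B) (B * C) := by
  constructor <;> simp only [← mul_assoc, ← h.rel_A, ← h.rel_B, ← h.rel_C, ← h.rel_D]

def toFirst : Alpha2 → (conGen Alpha1.rels).Quotient
  | A => of Alpha1.rels .A
  | B => of Alpha1.rels .B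
  | C => of Alpha1.rels .C
  | D => of Alpha1.rels .D
  | E => of Alpha1.rels .D * of Alpha1.rels .Abar

end Alpha2

namespace Alpha1

theorem IsModel.toAlpha2 {S : Type*} [Semigroup S] {A B C D a b c d : S}
    (h : IsModel A B C D a b c d) : Alpha2.IsModel A B C D (D * a) where
  rel_A := h.rel_A
  rel_B :=
    calc B = d * c := h.eq_dbar_mul_cbar
      _ = B * C * D * B := by rw [h.dbar_eq, h.cbar_eq, ← mul_assoc]
  rel_C :=
    calc C = C * D * d := h.rel_C
      _ = C * D * B * C := by rw [h.dbar_eq, ← mul_assoc]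
  rel_D :=
    calc D = c * b := h.eq_cbar_mul_bbar
      _ = D * B * C * D := by rw [h.cbar_eq, h.bbar_eq, ← mul_assoc]
  rel_E :=
    calc D * a = D * (B * C * (D * a)) := by rw [← h.abar_eq]
      _ = D * B * C * (D * a) := by simp only [mul_assoc]

def toSecond : Alpha1 → (conGen Alpha2.rels).Quotient
  | A => of Alpha2.rels .A
  | B => of Alpha2.rels .B
  | C => of Alpha2.rels .C
  | D => of Alpha2.rels .D
  | Abar => of Alpha2.rels .B * of Alpha2.rels .C * of Alpha2.rels .E
  | Bbar => of Alpha2.rels .C * of Alpha2.rels .D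
  | Cbar => of Alpha2.rels .D * of Alpha2.rels .B
  | Dbar => of Alpha2.rels .B * of Alpha2.rels .C

theorem lift_toFirst_toSecond (h) (x : Alpha1) :
    lift Alpha2.toFirst h (toSecond x) = of rels x := by
  cases x <;> simp only [toSecond, Alpha2.toFirst, map_mul, lift_of]
  exacts [isModel_of.abar_eq.symm, isModel_of.bbar_eq.symm, isModel_of.cbar_eq.symm,
    isModel_of.dbar_eq.symm]

end Alpha1

theorem Alpha2.lift_toSecond_toFirst (h) (x : Alpha2) :
    lift Alpha1.toSecond h (toFirst x) = of rels x := by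
  cases x <;> simp only [toFirst, Alpha1.toSecond, map_mul, lift_of]
  rw [← mul_assoc, ← mul_assoc]
  exact isModel_of.rel_E.symm

/-- The semigroup presented by
`⟨A,B,C,D,Ā,B̄,C̄,D̄ ∣ A=ABCD, B=BCDD̄C̄, C=CDD̄, D=DD̄C̄B̄, Ā=D̄C̄B̄Ā, B̄=CDD̄C̄B̄, C̄=DD̄C̄, D̄=BCDD̄⟩`
is isomorphic to the semigroup presented by
`⟨A,B,C,D,E ∣ A=ABCD, B=BCDB, C=CDBC, D=DBCD, E=DBCE⟩`. -/
theorem presented_semigroups_isomorphic :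
    Nonempty ((conGen Alpha1.rels).Quotient ≃* (conGen Alpha2.rels).Quotient) :=
  ⟨mulEquivOfGenerators Alpha1.toSecond Alpha2.toFirst
    (fun _ _ => Alpha2.isModel_of.toAlpha1.lift_eq_of_rels)
    (fun _ _ => Alpha1.isModel_of.toAlpha2.lift_eq_of_rels)
    (Alpha1.lift_toFirst_toSecond _) (Alpha2.lift_toSecond_toFirst _)⟩
end
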